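/- arXiv:1412.2180 — 5 statements merged into one kernel-verified Lean document; each statement's English description precedes it below -/
import Mathlib

section
/- Let < be a total order on 𝒜ₙ, and let a be an unbarred letter and b̄ a barred letter that are adjacent (consecutive) in <. Then in any colored tableau T with respect to <, the set of boxes of T containing a or b̄ forms a skew Young diagram (a set-difference μ∖κ of two Young diagrams κ ⊆ μ) that contains no 2×2 square of boxes, i.e., it is a ribbon. -/
open scoped Classical

/-- A letter of the alphabet 𝒜ₙ: `(false, i)` is the unbarred letter `i+1`,
`(true, i)` is the barred letter `i+1` with a bar. -/
abbrev Letter (n : ℕ) := Bool × Fin n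

/-- A filling assigns an optional letter to each box of the plane; boxes outside
the underlying shape carry `none`. -/
abbrev Filling (n : ℕ) := ℕ × ℕ → Option (Letter n)

/-- `r` is a total (linear) order on `Letter n` extending the partial order of 𝒜ₙ,
in which the unbarred letters form a chain, the barred letters form a chain, and
barred and unbarred letters are incomparable. -/
def IsLinExt {n : ℕ} (r : Letter n → Letter n → Prop) : Prop :=
  IsLinearOrder (Letter n) r ∧ ∀ (b : Bool) (i j : Fin n), i ≤ j → r (b, i) (b, j)

/-- `T` is a semistandard colored tableau of shape `sh` with respect to the total order `r`:
rows and columns weakly increase with respect to `r`, no two identical unbarred letters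
share a column, and no two identical barred letters share a row. -/
def IsColoredTableau {n : ℕ} (r : Letter n → Letter n → Prop) (sh : YoungDiagram)
    (T : Filling n) : Prop :=
  (∀ c, (T c).isSome ↔ c ∈ sh) ∧
  (∀ i j₁ j₂ : ℕ, ∀ x y : Letter n, j₁ ≤ j₂ → T (i, j₁) = some x → T (i, j₂) = some y → r x y) ∧
  (∀ i₁ i₂ j : ℕ, ∀ x y : Letter n, i₁ ≤ i₂ → T (i₁, j) = some x → T (i₂, j) = some y → r x y) ∧
  (∀ i₁ i₂ j : ℕ, ∀ a : Fin n, i₁ ≠ i₂ → T (i₁, j) = some (false, a) →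
    T (i₂, j) ≠ some (false, a)) ∧
  (∀ i j₁ j₂ : ℕ, ∀ b : Fin n, j₁ ≠ j₂ → T (i, j₁) = some (true, b) →
    T (i, j₂) ≠ some (true, b))

/-- The unbarred reverse (row) reading word: unbarred entries, rows right to left,
rows top to bottom, skipping barred entries. -/
def uWord {n : ℕ} (sh : YoungDiagram) (T : Filling n) : List (Fin n) :=
  (List.range (sh.colLen 0)).flatMap fun i =>
    (List.range (sh.rowLen i)).reverse.filterMap fun j =>
      match T (i, j) with
      | some (false, a) => some a
      | _ => none

/-- The barred (column) reading word with bars removed: barred entries, columns bottom to top,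
columns left to right, skipping unbarred entries. -/
def vWord {n : ℕ} (sh : YoungDiagram) (T : Filling n) : List (Fin n) :=
  (List.range (sh.rowLen 0)).flatMap fun j =>
    (List.range (sh.colLen j)).reverse.filterMap fun i =>
      match T (i, j) with
      | some (true, b) => some b
      | _ => none

/-- The total reverse (row-column) reading word `w(T) = u(T)v(T)`. -/
def wWord {n : ℕ} (sh : YoungDiagram) (T : Filling n) : List (Fin n) :=
  uWord sh T ++ vWord sh T

/-- A word over `{1, …, n}` (encoded with `Fin n`, where `⟨i, _⟩` stands for the letter `i+1`)
is a ballot sequence if every prefix contains at least as many `i`'s as `i+1`'s. -/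
def IsBallot {n : ℕ} (w : List (Fin n)) : Prop :=
  ∀ p : List (Fin n), p <+: w → ∀ i : ℕ, ∀ h : i + 1 < n,
    p.count ⟨i + 1, h⟩ ≤ p.count ⟨i, Nat.lt_of_succ_lt h⟩

/-- A word over `{1, …, n}` is an `α`-ballot sequence if in every prefix the number of
`i+1`'s minus the number of `i`'s is at most `αᵢ − α_{i+1}`. -/
def IsAlphaBallot {n : ℕ} (α : Fin n → ℕ) (w : List (Fin n)) : Prop :=
  ∀ p : List (Fin n), p <+: w → ∀ i : ℕ, ∀ h : i + 1 < n,
    p.count ⟨i + 1, h⟩ + α ⟨i + 1, h⟩ ≤ p.count ⟨i, Nat.lt_of_succ_lt h⟩ + α ⟨i, Nat.lt_of_succ_lt h⟩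

/-- `y` covers `x` in the order `r`: they are adjacent (consecutive) with `x` below `y`. -/
def CoveredBy {n : ℕ} (r : Letter n → Letter n → Prop) (x y : Letter n) : Prop :=
  r x y ∧ x ≠ y ∧ ∀ z, r x z → r z y → z = x ∨ z = y

/-- `x` and `y` are adjacent (consecutive) in the order `r`, in either relative order. -/
def AdjacentIn {n : ℕ} (r : Letter n → Letter n → Prop) (x y : Letter n) : Prop :=
  CoveredBy r x y ∨ CoveredBy r y x

/-- `z` lies strictly between `x` and `y` in the order `r`. -/
def Between {n : ℕ} (r : Letter n → Letter n → Prop) (x y z : Letter n) : Prop :=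
  r x z ∧ r z y ∧ z ≠ x ∧ z ≠ y

/-- The order `r` is unbarred-tight: at most one barred letter occurs between any two
consecutive unbarred letters. -/
def UnbarredTight {n : ℕ} (r : Letter n → Letter n → Prop) : Prop :=
  ∀ i : ℕ, ∀ h : i + 1 < n, ∀ b₁ b₂ : Fin n,
    Between r (false, ⟨i, Nat.lt_of_succ_lt h⟩) (false, ⟨i + 1, h⟩) (true, b₁) →
    Between r (false, ⟨i, Nat.lt_of_succ_lt h⟩) (false, ⟨i + 1, h⟩) (true, b₂) → b₁ = b₂

/-- The order `r` is barred-tight: at most one unbarred letter occurs between any two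
consecutive barred letters. -/
def BarredTight {n : ℕ} (r : Letter n → Letter n → Prop) : Prop :=
  ∀ i : ℕ, ∀ h : i + 1 < n, ∀ a₁ a₂ : Fin n,
    Between r (true, ⟨i, Nat.lt_of_succ_lt h⟩) (true, ⟨i + 1, h⟩) (false, a₁) →
    Between r (true, ⟨i, Nat.lt_of_succ_lt h⟩) (true, ⟨i + 1, h⟩) (false, a₂) → a₁ = a₂

/-- Two boxes share an edge. -/
def BoxAdj (c d : ℕ × ℕ) : Prop :=
  (c.1 = d.1 ∧ (c.2 + 1 = d.2 ∨ d.2 + 1 = c.2)) ∨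
  (c.2 = d.2 ∧ (c.1 + 1 = d.1 ∨ d.1 + 1 = c.1))

/-- `c` and `d` are joined by a chain of boxes of `S`, each sharing an edge with the next. -/
def ConnIn (S : Set (ℕ × ℕ)) (c d : ℕ × ℕ) : Prop :=
  Relation.ReflTransGen (fun u v => u ∈ S ∧ v ∈ S ∧ BoxAdj u v) c d

/-- The orders `r` and `r'` agree except that the unbarred letter `a` and the barred letter `b̄`
are adjacent in both, with `a` immediately below `b̄` in `r` and `b̄` immediately below `a`
in `r'`. -/
def OrderSwitch {n : ℕ} (r r' : Letter n → Letter n → Prop) (a b : Fin n) : Prop :=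
  CoveredBy r (false, a) (true, b) ∧ CoveredBy r' (true, b) (false, a) ∧
  ∀ x y : Letter n, ¬(x = (false, a) ∧ y = (true, b)) → ¬(x = (true, b) ∧ y = (false, a)) →
    (r x y ↔ r' x y)

/-- The fillings `T` and `T'` are related by a conversion switch at the letters `a`, `b̄`:
they agree on all boxes not containing `a` or `b̄`, the set `S` of boxes containing `a` or `b̄`
is the same in both, and in each edge-connected component of `S` they contain the same number
of `a`'s. -/
def TableauSwitch {n : ℕ} (a b : Fin n) (T T' : Filling n) : Prop :=
  (∀ c, c ∉ {c | T c = some (false, a) ∨ T c = some (true, b)} → T' c = T c) ∧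
  (∀ c, c ∈ {c | T c = some (false, a) ∨ T c = some (true, b)} ↔
    (T' c = some (false, a) ∨ T' c = some (true, b))) ∧
  (∀ c, T c = some (false, a) ∨ T c = some (true, b) →
    {d | ConnIn {e | T e = some (false, a) ∨ T e = some (true, b)} c d ∧
      T d = some (false, a)}.ncard =
    {d | ConnIn {e | T e = some (false, a) ∨ T e = some (true, b)} c d ∧
      T' d = some (false, a)}.ncard)

/-- One step of conversion between pairs (total order, colored tableau of shape `sh`):
a single conversion switch, in either direction, through valid total orders and
colored tableaux. -/
def ConvStep {n : ℕ} (sh : YoungDiagram)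
    (p q : ((Letter n → Letter n → Prop) × Filling n)) : Prop :=
  IsLinExt p.1 ∧ IsLinExt q.1 ∧ IsColoredTableau p.1 sh p.2 ∧ IsColoredTableau q.1 sh q.2 ∧
  ∃ a b : Fin n, (OrderSwitch p.1 q.1 a b ∧ TableauSwitch a b p.2 q.2) ∨
    (OrderSwitch q.1 p.1 a b ∧ TableauSwitch a b q.2 p.2)

/-- `T` (w.r.t. `p.1`) and `T'` (w.r.t. `q.1`) correspond under conversion: they are connected
by a finite sequence of conversion switches through intermediate total orders and colored
tableaux. -/
def ConvertsTo {n : ℕ} (sh : YoungDiagram)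
    (p q : ((Letter n → Letter n → Prop) × Filling n)) : Prop :=
  Relation.ReflTransGen (ConvStep sh) p q

/-- The unbarred content of a filling: `α i` is the number of unbarred letters `i` in it. -/
def unbarredContent {n : ℕ} (sh : YoungDiagram) (T : Filling n) (i : Fin n) : ℕ :=
  (sh.cells.filter fun c => T c = some (false, i)).card

/-- The total content of a filling: the number of occurrences of `i` and `ī` together. -/
def totalContent {n : ℕ} (sh : YoungDiagram) (T : Filling n) (i : Fin n) : ℕ :=
  (sh.cells.filter fun c => T c = some (false, i) ∨ T c = some (true, i)).card

/-- The total color of a filling: the number of barred letters in it. -/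
def totalColor {n : ℕ} (sh : YoungDiagram) (T : Filling n) : ℕ :=
  (sh.cells.filter fun c => (T c).map Prod.fst = some true).card

/-- The natural order `1̄ < 1 < 2̄ < 2 < ⋯ < n̄ < n` on 𝒜ₙ. -/
def natOrd (n : ℕ) : Letter n → Letter n → Prop :=
  fun x y => x.2 < y.2 ∨ (x.2 = y.2 ∧ (x.1 = true ∨ y.1 = false))

/-- The small bar order `1̄ ≺ 2̄ ≺ ⋯ ≺ n̄ ≺ 1 ≺ 2 ≺ ⋯ ≺ n` on 𝒜ₙ. -/
def smallBarOrd (n : ℕ) : Letter n → Letter n → Prop :=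
  fun x y => (x.1 = true ∧ y.1 = false) ∨ (x.1 = y.1 ∧ x.2 ≤ y.2)

/-- `f` is a semistandard skew tableau of shape `outer / inner` with entries in `{1, …, n}`:
rows weakly increase, columns strictly increase. -/
def IsSkewSSYT {n : ℕ} (outer inner : YoungDiagram) (f : ℕ × ℕ → Option (Fin n)) : Prop :=
  (∀ c, (f c).isSome ↔ (c ∈ outer ∧ c ∉ inner)) ∧
  (∀ i j₁ j₂ : ℕ, ∀ x y : Fin n, j₁ ≤ j₂ → f (i, j₁) = some x → f (i, j₂) = some y → x ≤ y) ∧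
  (∀ i₁ i₂ j : ℕ, ∀ x y : Fin n, i₁ < i₂ → f (i₁, j) = some x → f (i₂, j) = some y → x < y)

/-- The reverse row reading word of a (skew) tableau supported inside the rows of `sh`:
entries along rows right to left, rows top to bottom. -/
def revRowWord {n : ℕ} (sh : YoungDiagram) (f : ℕ × ℕ → Option (Fin n)) : List (Fin n) :=
  (List.range (sh.colLen 0)).flatMap fun i =>
    (List.range (sh.rowLen i)).reverse.filterMap fun j => f (i, j)

/-!
Since rows and columns increase, `T` is monotone for the product order on boxes, so the boxes
whose entries lie in the two-element interval `{a, b̄}` of the total order form an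
order-connected set; any finite order-connected set `S` of boxes is the skew diagram
`μ / κ` with `μ` the lower closure of `S` and `κ = μ \ S`.
-/

namespace YoungDiagram

theorem exists_eq_cells_sdiff_of_ordConnected {S : Finset (ℕ × ℕ)}
    (hS : (S : Set (ℕ × ℕ)).OrdConnected) :
    ∃ κ μ : YoungDiagram, κ ≤ μ ∧ S = μ.cells \ κ.cells := by
  have mem_closure {c : ℕ × ℕ} : c ∈ S.biUnion Finset.Iic ↔ ∃ s ∈ S, c ≤ s := by
    simp only [Finset.mem_biUnion, Finset.mem_Iic]
  let μ : YoungDiagram :=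
    { cells := S.biUnion Finset.Iic
      isLowerSet := fun c d hdc hc => by
        obtain ⟨s, hs, hcs⟩ := mem_closure.1 hc
        exact mem_closure.2 ⟨s, hs, hdc.trans hcs⟩ }
  -- `κ` is a lower set because `S` is order-connected: a cell of `S` below a cell `c` of
  -- `μ \ S` would put `c` between two cells of `S`.
  let κ : YoungDiagram :=
    { cells := S.biUnion Finset.Iic \ S
      isLowerSet := fun c d hdc hc => by
        obtain ⟨hcμ, hcS⟩ := Finset.mem_sdiff.1 hc
        refine Finset.mem_sdiff.2 ⟨μ.isLowerSet hdc hcμ, fun hdS => hcS ?_⟩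
        obtain ⟨s, hs, hcs⟩ := mem_closure.1 hcμ
        exact hS.out hdS hs ⟨hdc, hcs⟩ }
  refine ⟨κ, μ, Finset.sdiff_subset, ?_⟩
  have hSμ : S ⊆ μ.cells := fun c hc => mem_closure.2 ⟨c, hc, le_rfl⟩
  exact (Finset.sdiff_sdiff_eq_self hSμ).symm

end YoungDiagram

namespace IsColoredTableau

variable {n : ℕ} {r : Letter n → Letter n → Prop} {sh : YoungDiagram} {T : Filling n}

theorem rel_right (hT : IsColoredTableau r sh T) {i j : ℕ} {x y : Letter n}
    (hx : T (i, j) = some x) (hy : T (i, j + 1) = some y) : r x y :=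
  hT.2.1 i j (j + 1) x y j.le_succ hx hy

theorem rel_below (hT : IsColoredTableau r sh T) {i j : ℕ} {x y : Letter n}
    (hx : T (i, j) = some x) (hy : T (i + 1, j) = some y) : r x y :=
  hT.2.2.1 i (i + 1) j x y i.le_succ hx hy

theorem ne_below_of_unbarred (hT : IsColoredTableau r sh T) {i j : ℕ} {a : Fin n}
    (ha : T (i, j) = some (false, a)) : T (i + 1, j) ≠ some (false, a) :=
  hT.2.2.2.1 i (i + 1) j a (by omega) ha

theorem ne_right_of_barred (hT : IsColoredTableau r sh T) {i j : ℕ} {b : Fin n}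
    (hb : T (i, j) = some (true, b)) : T (i, j + 1) ≠ some (true, b) :=
  hT.2.2.2.2 i j (j + 1) b (by omega) hb

theorem rel_of_le [IsTrans (Letter n) r] (hT : IsColoredTableau r sh T) {c d : ℕ × ℕ}
    (hcd : c ≤ d) {x y : Letter n} (hx : T c = some x) (hy : T d = some y) : r x y := by
  have hd : d ∈ sh := (hT.1 d).1 (by simp [hy])
  have hcorner : (c.1, d.2) ∈ sh := sh.isLowerSet ⟨hcd.1, le_rfl⟩ hd
  obtain ⟨z, hz⟩ := Option.isSome_iff_exists.1 ((hT.1 _).2 hcorner)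
  exact _root_.trans_of r (hT.2.1 c.1 c.2 d.2 x z hcd.2 hx hz)
    (hT.2.2.1 c.1 d.1 d.2 z y hcd.1 hz hy)

theorem ordConnected_of_coveredBy [Std.Refl r] [IsTrans (Letter n) r]
    (hT : IsColoredTableau r sh T) {lo hi : Letter n} (hcov : CoveredBy r lo hi) :
    ((sh.cells.filter fun c => T c = some lo ∨ T c = some hi : Finset (ℕ × ℕ)) :
      Set (ℕ × ℕ)).OrdConnected := by
  have lo_le : ∀ x, x = lo ∨ x = hi → r lo x := by
    rintro x (rfl | rfl)
    exacts [refl_of r x, hcov.1]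
  have le_hi : ∀ x, x = lo ∨ x = hi → r x hi := by
    rintro x (rfl | rfl)
    exacts [hcov.1, refl_of r x]
  refine ⟨fun c hc d hd e ⟨hce, hed⟩ => ?_⟩
  simp only [Finset.coe_filter, Set.mem_ofPred_eq] at hc hd ⊢
  have he : e ∈ sh := sh.isLowerSet hed hd.1
  obtain ⟨z, hz⟩ := Option.isSome_iff_exists.1 ((hT.1 e).2 he)
  have value {c : ℕ × ℕ} (h : T c = some lo ∨ T c = some hi) :
      ∃ x, T c = some x ∧ (x = lo ∨ x = hi) := by
    rcases h with h | h
    exacts [⟨lo, h, Or.inl rfl⟩, ⟨hi, h, Or.inr rfl⟩]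
  obtain ⟨x, hx, hxS⟩ := value hc.2
  obtain ⟨y, hy, hyS⟩ := value hd.2
  have hlo : r lo z := _root_.trans_of r (lo_le x hxS) (hT.rel_of_le hce hx hz)
  have hhi : r z hi := _root_.trans_of r (hT.rel_of_le hed hz hy) (le_hi y hyS)
  refine ⟨he, ?_⟩
  rcases hcov.2.2 z hlo hhi with rfl | rfl
  exacts [Or.inl hz, Or.inr hz]

/-- Unbarred `a`'s occur at most once per column and barred `b̄`'s at most once per row, which
forces a 2×2 square of them into a checkerboard `a b̄ / b̄ a` or `b̄ a / a b̄`; in both, the top-right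
entry is squeezed between two equal entries. -/
theorem not_square [Std.Antisymm r] (hT : IsColoredTableau r sh T) (a b : Fin n)
    (i j : ℕ) :
    ¬((T (i, j) = some (false, a) ∨ T (i, j) = some (true, b)) ∧
      (T (i + 1, j) = some (false, a) ∨ T (i + 1, j) = some (true, b)) ∧
      (T (i, j + 1) = some (false, a) ∨ T (i, j + 1) = some (true, b)) ∧
      (T (i + 1, j + 1) = some (false, a) ∨ T (i + 1, j + 1) = some (true, b))) := by
  rintro ⟨h00, h10, h01, h11⟩
  have hab : ((false, a) : Letter n) ≠ (true, b) := by simp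
  rcases h00 with h00 | h00
  · have h10 := h10.resolve_left (hT.ne_below_of_unbarred h00)
    have h11 := h11.resolve_right (hT.ne_right_of_barred h10)
    have h01 := h01.resolve_left fun h => hT.ne_below_of_unbarred h h11
    exact hab (antisymm_of r (hT.rel_right h00 h01) (hT.rel_below h01 h11))
  · have h01 := h01.resolve_right (hT.ne_right_of_barred h00)
    have h11 := h11.resolve_left (hT.ne_below_of_unbarred h01)
    exact hab (antisymm_of r (hT.rel_below h01 h11) (hT.rel_right h00 h01))

end IsColoredTableau

/-- If the unbarred letter `a` and the barred letter `b̄` are adjacent in the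
total order `r`, then in any colored tableau `T` with respect to `r` the set of boxes
containing `a` or `b̄` is a skew Young diagram containing no 2×2 square, i.e. a ribbon. -/
theorem boxes_of_adjacent_letters_form_ribbon {n : ℕ} (r : Letter n → Letter n → Prop)
    (hr : IsLinExt r) (a b : Fin n) (hadj : AdjacentIn r (false, a) (true, b))
    (sh : YoungDiagram) (T : Filling n) (hT : IsColoredTableau r sh T) :
    (∃ κ μ : YoungDiagram, κ ≤ μ ∧
      (sh.cells.filter fun c => T c = some (false, a) ∨ T c = some (true, b)) =
        μ.cells \ κ.cells) ∧
    (∀ i j : ℕ,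
      ¬((i, j) ∈ (sh.cells.filter fun c => T c = some (false, a) ∨ T c = some (true, b)) ∧
        (i + 1, j) ∈ (sh.cells.filter fun c => T c = some (false, a) ∨ T c = some (true, b)) ∧
        (i, j + 1) ∈ (sh.cells.filter fun c => T c = some (false, a) ∨ T c = some (true, b)) ∧
        (i + 1, j + 1) ∈
          (sh.cells.filter fun c => T c = some (false, a) ∨ T c = some (true, b)))) := by
  have := hr.1
  refine ⟨YoungDiagram.exists_eq_cells_sdiff_of_ordConnected ?_, fun i j hsq => ?_⟩
  · rcases hadj with hcov | hcov
    · exact hT.ordConnected_of_coveredBy hcov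
    · simpa only [or_comm] using hT.ordConnected_of_coveredBy hcov
  · simp only [Finset.mem_filter] at hsq
    exact hT.not_square a b i j ⟨hsq.1.2, hsq.2.1.2, hsq.2.2.1.2, hsq.2.2.2.2⟩
end

section
/- Let D be a nonempty edge-connected skew Young diagram containing no 2×2 square (a connected ribbon), let a be an unbarred letter and b̄ a barred letter of 𝒜ₙ, and let < be a total order on 𝒜ₙ in which a and b̄ are adjacent (in either relative order). Then there are exactly two fillings of the boxes of D with entries from {a, b̄} such that every row and column of the filling is weakly increasing with respect to <, no two a's appear in the same column, and no two b̄'s appear in the same row. -/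
open scoped Classical

/-!
If `a` lies just below `b̄`, then in every valid filling a box whose right neighbour lies in `D`
holds `a` (a `b̄` there would be followed by a second `b̄` or by a smaller `a` in its row), and
a box whose upper neighbour lies in `D` holds `b̄`. The contents `j - i` of a connected ribbon
are pairwise distinct and form an interval, so every box except the one of largest content has
such a neighbour, and no box has both. The filling is therefore determined away from that end
box, which can hold either letter. Transposing exchanges rows with columns and the roles of `a`
and `b̄`, which reduces the case `b̄ < a` to this one.
-/

def IsTwoLetterTableau {α : Type*} (r : α → α → Prop) (x y : α) (D : Finset (ℕ × ℕ))
    (f : ℕ × ℕ → Option α) : Prop :=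
  (∀ c, (f c).isSome ↔ c ∈ D) ∧
  (∀ c ∈ D, f c = some x ∨ f c = some y) ∧
  (∀ i j₁ j₂ : ℕ, ∀ u v : α, j₁ ≤ j₂ → f (i, j₁) = some u → f (i, j₂) = some v → r u v) ∧
  (∀ i₁ i₂ j : ℕ, ∀ u v : α, i₁ ≤ i₂ → f (i₁, j) = some u → f (i₂, j) = some v → r u v) ∧
  (∀ i₁ i₂ j : ℕ, i₁ ≠ i₂ → f (i₁, j) = some x → f (i₂, j) ≠ some x) ∧
  (∀ i j₁ j₂ : ℕ, j₁ ≠ j₂ → f (i, j₁) = some y → f (i, j₂) ≠ some y)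

structure IsConnectedRibbon (D : Finset (ℕ × ℕ)) : Prop where
  ordConnected : (D : Set (ℕ × ℕ)).OrdConnected
  no_square : ∀ i j : ℕ, ¬((i, j) ∈ D ∧ (i + 1, j) ∈ D ∧ (i, j + 1) ∈ D ∧ (i + 1, j + 1) ∈ D)
  connIn : ∀ c ∈ D, ∀ d ∈ D, ConnIn D c d

def content (c : ℕ × ℕ) : ℤ := c.2 - c.1

theorem ConnIn.exists_content_eq {S : Set (ℕ × ℕ)} {c d : ℕ × ℕ} (h : ConnIn S c d) (hc : c ∈ S)
    {t : ℤ} (hct : content c ≤ t) (htd : t ≤ content d) : ∃ e ∈ S, content e = t := by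
  induction h with
  | refl => exact ⟨c, hc, le_antisymm hct htd⟩
  | @tail u v _ huv ih =>
    obtain ⟨-, hv, hadj⟩ := huv
    by_cases htu : t ≤ content u
    · exact ih htu
    · refine ⟨v, hv, le_antisymm ?_ htd⟩
      unfold BoxAdj at hadj
      unfold content at htu htd ⊢
      omega

theorem Set.OrdConnected.of_swap_mem {S S' : Set (ℕ × ℕ)} (hS : S.OrdConnected)
    (hS' : ∀ c, c ∈ S' ↔ c.swap ∈ S) : S'.OrdConnected := by
  refine ⟨fun c hc d hd e he => (hS' e).2 ?_⟩
  exact hS.out ((hS' c).1 hc) ((hS' d).1 hd) ⟨Prod.swap_le_swap.2 he.1, Prod.swap_le_swap.2 he.2⟩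

theorem ConnIn.swap {S S' : Set (ℕ × ℕ)} (hS' : ∀ c, c ∈ S' ↔ c.swap ∈ S) {c d : ℕ × ℕ}
    (h : ConnIn S c d) : ConnIn S' c.swap d.swap := by
  refine Relation.ReflTransGen.lift Prod.swap (fun u v ⟨hu, hv, hadj⟩ => ?_) _ _ h
  refine ⟨(hS' _).2 hu, (hS' _).2 hv, ?_⟩
  unfold BoxAdj at hadj ⊢
  simp only [Prod.fst_swap, Prod.snd_swap]
  tauto

namespace IsConnectedRibbon

variable {D D' : Finset (ℕ × ℕ)}

theorem transpose (hD : IsConnectedRibbon D) (hD' : ∀ c, c ∈ D' ↔ c.swap ∈ D) :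
    IsConnectedRibbon D' where
  ordConnected := hD.ordConnected.of_swap_mem (by simpa using hD')
  no_square i j h := by
    simp only [hD', Prod.swap_prod_mk] at h
    exact hD.no_square j i ⟨h.1, h.2.2.1, h.2.1, h.2.2.2⟩
  connIn c hc d hd := by
    simpa using (hD.connIn _ ((hD' c).1 hc) _ ((hD' d).1 hd)).swap (S' := D') (by simpa using hD')

theorem mem_of_le_of_le (hD : IsConnectedRibbon D) {c d e : ℕ × ℕ} (hc : c ∈ D) (hd : d ∈ D)
    (hce : c ≤ e) (hed : e ≤ d) : e ∈ D :=
  hD.ordConnected.out hc hd ⟨hce, hed⟩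

theorem content_injOn (hD : IsConnectedRibbon D) : Set.InjOn content D := by
  suffices h : ∀ c ∈ D, ∀ d ∈ D, c.1 ≤ d.1 → content c = content d → c = d by
    intro c hc d hd hcd
    rcases le_total c.1 d.1 with hle | hle
    exacts [h c hc d hd hle hcd, (h d hd c hc hle hcd.symm).symm]
  rintro ⟨i, j⟩ hc ⟨i', j'⟩ hd (hii' : i ≤ i') hcd
  unfold content at hcd
  by_contra hne
  have hlt : i < i' ∧ j < j' := by
    simp only [Prod.mk.injEq] at hne
    omega
  have mem : ∀ e : ℕ × ℕ, (i, j) ≤ e → e ≤ (i', j') → e ∈ D := fun e => hD.mem_of_le_of_le hc hd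
  refine hD.no_square i j ⟨hc, mem _ ?_ ?_, mem _ ?_ ?_, mem _ ?_ ?_⟩ <;>
    exact Prod.mk_le_mk.2 ⟨by omega, by omega⟩

theorem right_mem_or_up_mem (hD : IsConnectedRibbon D) {i j : ℕ} {m : ℕ × ℕ} (hc : (i, j) ∈ D)
    (hm : m ∈ D) (hlt : content (i, j) < content m) :
    (i, j + 1) ∈ D ∨ ∃ k, i = k + 1 ∧ (k, j) ∈ D := by
  obtain ⟨⟨i', j'⟩, he, hcontent⟩ :=
    (hD.connIn _ hc _ hm).exists_content_eq hc (by simp) (Int.add_one_le_of_lt hlt)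
  unfold content at hcontent
  simp only at hcontent
  rcases le_or_gt i i' with hii' | hi'i
  · exact .inl (hD.mem_of_le_of_le hc he (by simp) (Prod.mk_le_mk.2 ⟨hii', by omega⟩))
  · refine .inr ⟨i - 1, by omega, hD.mem_of_le_of_le he hc ?_ (by simp)⟩
    exact Prod.mk_le_mk.2 ⟨by omega, by omega⟩

theorem right_notMem_of_up_mem (hD : IsConnectedRibbon D) {i j : ℕ} (hup : (i, j) ∈ D)
    (hc : (i + 1, j) ∈ D) : (i + 1, j + 1) ∉ D := fun hr =>
  hD.no_square i j ⟨hup, hc, hD.mem_of_le_of_le hup hr (by simp) (by simp), hr⟩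

end IsConnectedRibbon

theorem YoungDiagram.ordConnected_cells_sdiff (κ μ : YoungDiagram) :
    ((μ.cells \ κ.cells : Finset (ℕ × ℕ)) : Set (ℕ × ℕ)).OrdConnected := by
  rw [Finset.coe_sdiff, Set.sdiff_eq]
  exact μ.isLowerSet.ordConnected.inter κ.isLowerSet.compl.ordConnected

section TwoLetterTableau

variable {α : Type*} {r : α → α → Prop} {x y : α} {D D' : Finset (ℕ × ℕ)}
  {f : ℕ × ℕ → Option α}

namespace IsTwoLetterTableau

theorem apply_eq_of_right_mem (hf : IsTwoLetterTableau r x y D f) (hyx : ¬r y x) {i j : ℕ}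
    (hc : (i, j) ∈ D) (hright : (i, j + 1) ∈ D) : f (i, j) = some x := by
  obtain ⟨-, hmem, hrow, -, -, hrowy⟩ := hf
  rcases hmem _ hc with h | h
  · exact h
  rcases hmem _ hright with h' | h'
  · exact absurd (hrow i j (j + 1) y x (by omega) h h') hyx
  · exact absurd h' (hrowy i j (j + 1) (by omega) h)

theorem apply_eq_of_up_mem (hf : IsTwoLetterTableau r x y D f) (hyx : ¬r y x) {i j : ℕ}
    (hup : (i, j) ∈ D) (hc : (i + 1, j) ∈ D) : f (i + 1, j) = some y := by
  obtain ⟨-, hmem, -, hcol, hcolx, -⟩ := hf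
  rcases hmem _ hc with h | h
  · rcases hmem _ hup with h' | h'
    · exact absurd h (hcolx i (i + 1) j (by omega) h')
    · exact absurd (hcol i (i + 1) j y x (by omega) h' h) hyx
  · exact h

theorem transpose (hD' : ∀ c, c ∈ D' ↔ c.swap ∈ D) (hf : IsTwoLetterTableau r x y D f) :
    IsTwoLetterTableau r y x D' (f ∘ Prod.swap) := by
  obtain ⟨hsome, hmem, hrow, hcol, hcolx, hrowy⟩ := hf
  exact ⟨fun c => by simp [hD', hsome], fun c hc => (hmem _ ((hD' c).1 hc)).symm,
    fun i j₁ j₂ => hcol j₁ j₂ i, fun i₁ i₂ j => hrow j i₁ i₂, fun i₁ i₂ j => hrowy j i₁ i₂,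
    fun i j₁ j₂ => hcolx j₁ j₂ i⟩

end IsTwoLetterTableau

theorem card_isTwoLetterTableau_transpose (hD' : ∀ c, c ∈ D' ↔ c.swap ∈ D) :
    Nat.card {f // IsTwoLetterTableau r x y D f} =
      Nat.card {g // IsTwoLetterTableau r y x D' g} :=
  Nat.card_congr
    { toFun f := ⟨f.1 ∘ Prod.swap, f.2.transpose hD'⟩
      invFun g := ⟨g.1 ∘ Prod.swap, g.2.transpose fun c => by simp [hD']⟩
      left_inv _ := rfl
      right_inv _ := rfl }

theorem isTwoLetterTableau_of_adjacent [Std.Refl r] (hD : (D : Set (ℕ × ℕ)).OrdConnected)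
    (hxy : r x y) (hne : x ≠ y) (hsome : ∀ c, (f c).isSome ↔ c ∈ D)
    (hmem : ∀ c ∈ D, f c = some x ∨ f c = some y)
    (hright : ∀ i j, (i, j) ∈ D → (i, j + 1) ∈ D → f (i, j) = some x)
    (hup : ∀ i j, (i, j) ∈ D → (i + 1, j) ∈ D → f (i + 1, j) = some y) :
    IsTwoLetterTableau r x y D f := by
  have mem_of_eq {c u} (h : f c = some u) : c ∈ D := (hsome c).1 (by simp [h])
  have val_of_eq {c u} (h : f c = some u) : u = x ∨ u = y := by
    rcases hmem c (mem_of_eq h) with h' | h' <;> rw [h] at h' <;> simp_all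
  have left_eq {i j₁ j₂ u v} (hlt : j₁ < j₂) (hu : f (i, j₁) = some u)
      (hv : f (i, j₂) = some v) : u = x := by
    have hr := hD.out (mem_of_eq hu) (mem_of_eq hv) (show (i, j₁ + 1) ∈ Set.Icc (i, j₁) (i, j₂)
      from ⟨Prod.mk_le_mk.2 ⟨le_rfl, by omega⟩, Prod.mk_le_mk.2 ⟨le_rfl, hlt⟩⟩)
    simpa [hright i j₁ (mem_of_eq hu) hr] using hu.symm
  have lower_eq {i₁ i₂ j u v} (hlt : i₁ < i₂) (hu : f (i₁, j) = some u)
      (hv : f (i₂, j) = some v) : v = y := by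
    obtain ⟨k, rfl⟩ : ∃ k, i₂ = k + 1 := ⟨i₂ - 1, by omega⟩
    have hk := hD.out (mem_of_eq hu) (mem_of_eq hv) (show (k, j) ∈ Set.Icc (i₁, j) (k + 1, j)
      from ⟨Prod.mk_le_mk.2 ⟨by omega, le_rfl⟩, Prod.mk_le_mk.2 ⟨by omega, le_rfl⟩⟩)
    simpa [hup k j hk (mem_of_eq hv)] using hv.symm
  refine ⟨hsome, hmem, ?_, ?_, ?_, ?_⟩
  · intro i j₁ j₂ u v hle hu hv
    rcases hle.lt_or_eq with hlt | rfl
    · rw [left_eq hlt hu hv]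
      rcases val_of_eq hv with rfl | rfl
      exacts [refl _, hxy]
    · cases hu.symm.trans hv
      exact refl u
  · intro i₁ i₂ j u v hle hu hv
    rcases hle.lt_or_eq with hlt | rfl
    · rw [lower_eq hlt hu hv]
      rcases val_of_eq hu with rfl | rfl
      exacts [hxy, refl _]
    · cases hu.symm.trans hv
      exact refl u
  · intro i₁ i₂ j hne' h₁ h₂
    rcases lt_or_gt_of_ne hne' with hlt | hlt
    exacts [hne (lower_eq hlt h₁ h₂), hne (lower_eq hlt h₂ h₁)]
  · intro i j₁ j₂ hne' h₁ h₂
    rcases lt_or_gt_of_ne hne' with hlt | hlt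
    exacts [hne (left_eq hlt h₁ h₂).symm, hne (left_eq hlt h₂ h₁).symm]

def ribbonFilling (D : Finset (ℕ × ℕ)) (m : ℕ × ℕ) (x y v : α) : ℕ × ℕ → Option α :=
  fun c => if c ∈ D then some (if c = m then v else if (c.1, c.2 + 1) ∈ D then x else y) else none

variable {m : ℕ × ℕ}

theorem isTwoLetterTableau_ribbonFilling [Std.Refl r] (hD : IsConnectedRibbon D) (hm : m ∈ D)
    (hmax : ∀ c ∈ D, content c ≤ content m) (hxy : r x y) (hne : x ≠ y) {v : α}
    (hv : v = x ∨ v = y) : IsTwoLetterTableau r x y D (ribbonFilling D m x y v) := by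
  refine isTwoLetterTableau_of_adjacent hD.ordConnected hxy hne
    (fun c => by by_cases hc : c ∈ D <;> simp [ribbonFilling, hc]) (fun c hc => ?_) ?_ ?_
  · simp only [ribbonFilling, if_pos hc, Option.some.injEq]
    split_ifs
    exacts [hv, .inl rfl, .inr rfl]
  · intro i j hc hright
    have hcm : (i, j) ≠ m := by
      rintro rfl
      have := hmax _ hright
      simp [content] at this
    simp [ribbonFilling, hc, hcm, hright]
  · intro i j hup hc
    have hcm : (i + 1, j) ≠ m := by
      rintro rfl
      have := hmax _ hup
      simp [content] at this
      omega
    simp [ribbonFilling, hc, hcm, hD.right_notMem_of_up_mem hup hc]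

theorem IsTwoLetterTableau.eq_ribbonFilling (hD : IsConnectedRibbon D) (hm : m ∈ D)
    (hmax : ∀ c ∈ D, content c ≤ content m) (hyx : ¬r y x) (hf : IsTwoLetterTableau r x y D f)
    {v : α} (hfm : f m = some v) : f = ribbonFilling D m x y v := by
  funext ⟨i, j⟩
  by_cases hc : (i, j) ∈ D
  swap
  · simpa [ribbonFilling, hc] using (hf.1 (i, j)).not.2 hc
  by_cases hcm : (i, j) = m
  · simp [ribbonFilling, hcm, hm, hfm]
  have hlt : content (i, j) < content m :=
    (hmax _ hc).lt_of_ne fun h => hcm (hD.content_injOn hc hm h)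
  rcases hD.right_mem_or_up_mem hc hm hlt with hright | ⟨k, rfl, hup⟩
  · simp [ribbonFilling, hc, hcm, hright, hf.apply_eq_of_right_mem hyx hc hright]
  · simp [ribbonFilling, hc, hcm, hD.right_notMem_of_up_mem hup hc,
      hf.apply_eq_of_up_mem hyx hup hc]

theorem card_isTwoLetterTableau [Std.Refl r] (hD : IsConnectedRibbon D) (hne : D.Nonempty)
    (hxy : r x y) (hyx : ¬r y x) : Nat.card {f // IsTwoLetterTableau r x y D f} = 2 := by
  obtain ⟨m, hm, hmax⟩ := D.exists_max_image content hne
  have hxy' : x ≠ y := by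
    rintro rfl
    exact hyx (refl x)
  rw [Nat.card_eq_two_iff]
  refine ⟨⟨_, isTwoLetterTableau_ribbonFilling hD hm hmax hxy hxy' (.inl rfl)⟩,
    ⟨_, isTwoLetterTableau_ribbonFilling hD hm hmax hxy hxy' (.inr rfl)⟩, fun h => ?_, ?_⟩
  · have := congrFun (congrArg Subtype.val h) m
    simp [ribbonFilling, hm] at this
    exact hxy' this
  · refine Set.eq_univ_of_forall fun ⟨f, hf⟩ => ?_
    rcases hf.2.1 m hm with hfm | hfm
    · exact .inl (Subtype.ext (hf.eq_ribbonFilling hD hm hmax hyx hfm))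
    · exact .inr (Subtype.ext (hf.eq_ribbonFilling hD hm hmax hyx hfm))

end TwoLetterTableau

/-- A nonempty edge-connected ribbon `D` admits exactly two fillings by the
letters `a` and `b̄` (where `a` and `b̄` are adjacent in the total order `r`) with weakly
increasing rows and columns, no two `a`'s in a column and no two `b̄`'s in a row. -/
theorem connected_ribbon_two_fillings {n : ℕ} (r : Letter n → Letter n → Prop)
    (hr : IsLinExt r) (a b : Fin n) (hadj : AdjacentIn r (false, a) (true, b))
    (D : Finset (ℕ × ℕ)) (hne : D.Nonempty)
    (hskew : ∃ κ μ : YoungDiagram, κ ≤ μ ∧ D = μ.cells \ κ.cells)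
    (hribbon : ∀ i j : ℕ,
      ¬((i, j) ∈ D ∧ (i + 1, j) ∈ D ∧ (i, j + 1) ∈ D ∧ (i + 1, j + 1) ∈ D))
    (hconn : ∀ c ∈ D, ∀ d ∈ D, ConnIn (↑D) c d) :
    Nat.card {f : Filling n //
      (∀ c, (f c).isSome ↔ c ∈ D) ∧
      (∀ c ∈ D, f c = some (false, a) ∨ f c = some (true, b)) ∧
      (∀ i j₁ j₂ : ℕ, ∀ x y : Letter n, j₁ ≤ j₂ →
        f (i, j₁) = some x → f (i, j₂) = some y → r x y) ∧
      (∀ i₁ i₂ j : ℕ, ∀ x y : Letter n, i₁ ≤ i₂ →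
        f (i₁, j) = some x → f (i₂, j) = some y → r x y) ∧
      (∀ i₁ i₂ j : ℕ, i₁ ≠ i₂ → f (i₁, j) = some (false, a) → f (i₂, j) ≠ some (false, a)) ∧
      (∀ i j₁ j₂ : ℕ, j₁ ≠ j₂ → f (i, j₁) = some (true, b) → f (i, j₂) ≠ some (true, b))} =
      2 := by
  obtain ⟨κ, μ, -, hskew⟩ := hskew
  have hD : IsConnectedRibbon D :=
    ⟨hskew ▸ YoungDiagram.ordConnected_cells_sdiff κ μ, hribbon, hconn⟩
  have := hr.1
  have hab : ((false, a) : Letter n) ≠ (true, b) := by simp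
  change Nat.card {f // IsTwoLetterTableau r (false, a) (true, b) D f} = 2
  rcases hadj with ⟨hlt, -⟩ | ⟨hlt, -⟩
  · exact card_isTwoLetterTableau hD hne hlt fun h => hab (antisymm hlt h)
  · have hDt : ∀ c, c ∈ D.map (Equiv.prodComm ℕ ℕ).toEmbedding ↔ c.swap ∈ D := fun c => by
      simp [Finset.mem_map_equiv]
    rw [card_isTwoLetterTableau_transpose hDt]
    exact card_isTwoLetterTableau (hD.transpose hDt) hne.map hlt fun h => hab (antisymm h hlt)
end

section
/- Let ≺ be a total order on 𝒜ₙ in which an unbarred letter a and a barred letter b̄ are adjacent. Suppose T and T′ are colored tableaux with respect to ≺ of the same shape such that T and T′ agree on every box not containing a or b̄, the set S of boxes containing a or b̄ is the same in T and T′, and in each edge-connected component of S the tableaux T and T′ contain the same number of a's. Then T = T′. -/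
open scoped Classical

/-! Suppose `a ≺ b̄` (the case `b̄ ≺ a` is the mirror image). Let `S` be the set of boxes holding
`a` or `b̄`. A box of `S` whose right neighbour lies in `S` must hold `a`, and one whose upper
neighbour lies in `S` must hold `b̄`, so no box of `S` has both. Pointing every box of `S` to such
a neighbour therefore makes each edge-connected component of `S` a tree with a single root: every
entry of the component except the root's is forced, and the root's entry is fixed by the number
of `a`'s. -/

theorem Relation.ReflTransGen.eq_of_rightUnique {α : Type*} {P R : α → α → Prop}
    (hP : Relator.RightUnique P) (hR : ∀ u v, R u v → P u v ∨ P v u) {c d : α}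
    (h : ReflTransGen R c d) (hc : ∀ y, ¬P c y) (hd : ∀ y, ¬P d y) : c = d := by
  suffices hdc : ReflTransGen P d c by
    rcases hdc.cases_head with hdc | ⟨y, hy, -⟩
    exacts [hdc.symm, (hd y hy).elim]
  clear hd
  induction h with
  | refl => exact .refl
  | tail _ huv ih =>
    rcases hR _ _ huv with hp | hp
    · rcases ih.cases_head with rfl | ⟨w, huw, hwc⟩
      · exact (hc _ hp).elim
      · exact hP huw hp ▸ hwc
    · exact .head hp ih

theorem apply_eq_iff_of_ncard_eq {β γ : Type*} {K : Set β} (hK : K.Finite) {g g' : β → γ}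
    {c : β} (hc : c ∈ K) (hagree : ∀ d ∈ K, d ≠ c → g d = g' d) {A : γ}
    (hcount : {d | d ∈ K ∧ g d = A}.ncard = {d | d ∈ K ∧ g' d = A}.ncard) :
    g c = A ↔ g' c = A := by
  by_contra hne
  wlog hgc : g c = A generalizing g g'
  · exact this (fun d hd hdc => (hagree d hd hdc).symm) hcount.symm (fun h => hne h.symm)
      (by tauto)
  have hg'c : g' c ≠ A := fun h => hne (iff_of_true hgc h)
  have hsub : {d | d ∈ K ∧ g' d = A} ⊆ {d | d ∈ K ∧ g d = A} := by
    rintro d ⟨hd, hd'⟩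
    rcases eq_or_ne d c with rfl | hdc
    · exact absurd hd' hg'c
    · exact ⟨hd, (hagree d hd hdc).trans hd'⟩
  have hssub := (Set.ssubset_iff_of_subset hsub).2 ⟨c, ⟨hc, hgc⟩, fun h => hg'c h.2⟩
  exact (Set.ncard_lt_ncard hssub (hK.subset fun _ h => h.1)).ne' hcount

theorem ConnIn.mem {S : Set (ℕ × ℕ)} {c d : ℕ × ℕ} (h : ConnIn S c d) (hc : c ∈ S) : d ∈ S := by
  rcases h.cases_tail with rfl | ⟨_, -, hd⟩
  exacts [hc, hd.2.1]

theorem eqOn_of_ncard_component_eq {γ : Type*} {S : Set (ℕ × ℕ)} (hS : S.Finite)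
    {P : ℕ × ℕ → ℕ × ℕ → Prop} (hP : Relator.RightUnique P)
    (hadj : ∀ u ∈ S, ∀ v ∈ S, BoxAdj u v → P u v ∨ P v u)
    {T T' : ℕ × ℕ → γ} {A B : γ} (hTS : ∀ c ∈ S, T c = A ∨ T c = B)
    (hT'S : ∀ c ∈ S, T' c = A ∨ T' c = B) (hforced : ∀ u v, P u v → T u = T' u)
    (hcount : ∀ c ∈ S,
      {d | ConnIn S c d ∧ T d = A}.ncard = {d | ConnIn S c d ∧ T' d = A}.ncard) :
    Set.EqOn T T' S := by
  intro c hc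
  by_cases hroot : ∃ v, P c v
  · obtain ⟨v, hv⟩ := hroot
    exact hforced c v hv
  push Not at hroot
  have hagree : ∀ d ∈ {d | ConnIn S c d}, d ≠ c → T d = T' d := by
    intro d hcd hdc
    by_contra hne
    refine hdc (Relation.ReflTransGen.eq_of_rightUnique hP ?_ hcd hroot
      fun w hw => hne (hforced d w hw)).symm
    exact fun u v ⟨hu, hv, huv⟩ => hadj u hu v hv huv
  have hiff := apply_eq_iff_of_ncard_eq (hS.subset fun d hd => ConnIn.mem hd hc)
    Relation.ReflTransGen.refl hagree (hcount c hc)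
  rcases hTS c hc with h | h <;> rcases hT'S c hc with h' | h' <;> simp_all

/-- Row indices grow downwards: `v` is the right neighbour of `u` or the box above it. -/
def RightOrUpIn (S : Set (ℕ × ℕ)) (u v : ℕ × ℕ) : Prop :=
  u ∈ S ∧ v ∈ S ∧ (v = (u.1, u.2 + 1) ∨ u = (v.1 + 1, v.2))

theorem RightOrUpIn.of_boxAdj {S : Set (ℕ × ℕ)} {u v : ℕ × ℕ} (hu : u ∈ S) (hv : v ∈ S)
    (h : BoxAdj u v) : RightOrUpIn S u v ∨ RightOrUpIn S v u := by
  obtain ⟨i, j⟩ := u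
  obtain ⟨i', j'⟩ := v
  simp only [RightOrUpIn, BoxAdj, Prod.ext_iff] at h ⊢
  simp only [hu, hv, true_and]
  omega

theorem RightOrUpIn.eq_of_isRight_iff {S : Set (ℕ × ℕ)} {u v w : ℕ × ℕ} (hv : RightOrUpIn S u v)
    (hw : RightOrUpIn S u w) (h : v = (u.1, u.2 + 1) ↔ w = (u.1, u.2 + 1)) : v = w := by
  obtain ⟨i, j⟩ := u
  obtain ⟨i', j'⟩ := v
  obtain ⟨i'', j''⟩ := w
  simp only [RightOrUpIn, Prod.ext_iff] at hv hw h ⊢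
  omega

theorem RightOrUpIn.eq_of_isLeft_iff {S : Set (ℕ × ℕ)} {u v w : ℕ × ℕ} (hv : RightOrUpIn S v u)
    (hw : RightOrUpIn S w u) (h : u = (v.1, v.2 + 1) ↔ u = (w.1, w.2 + 1)) : v = w := by
  obtain ⟨i, j⟩ := u
  obtain ⟨i', j'⟩ := v
  obtain ⟨i'', j''⟩ := w
  simp only [RightOrUpIn, Prod.ext_iff] at hv hw h ⊢
  omega

def switchBoxes {n : ℕ} (a b : Fin n) (T : Filling n) : Set (ℕ × ℕ) :=
  {c | T c = some (false, a) ∨ T c = some (true, b)}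

theorem IsColoredTableau.switchBoxes_finite {n : ℕ} {r : Letter n → Letter n → Prop}
    {sh : YoungDiagram} {T : Filling n} (hT : IsColoredTableau r sh T) (a b : Fin n) :
    (switchBoxes a b T).Finite :=
  sh.cells.finite_toSet.subset fun c hc => (hT.1 c).1 (by rcases hc with h | h <;> simp [h])

namespace IsColoredTableau

variable {n : ℕ} {r : Letter n → Letter n → Prop} [Std.Antisymm r] {sh sh' : YoungDiagram}
  {T T' : Filling n} {a b : Fin n} {i j : ℕ}

theorem left_eq_unbarred (hT : IsColoredTableau r sh T) (hab : r (false, a) (true, b))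
    (hl : (i, j) ∈ switchBoxes a b T) (hr : (i, j + 1) ∈ switchBoxes a b T) :
    T (i, j) = some (false, a) := by
  rcases hl with hl | hl
  · exact hl
  rcases hr with hr | hr
  · exact absurd (antisymm hab (hT.2.1 i j (j + 1) _ _ j.le_succ hl hr)) (by simp)
  · exact absurd hr (hT.2.2.2.2 i j (j + 1) b (by omega) hl)

theorem lower_eq_barred (hT : IsColoredTableau r sh T) (hab : r (false, a) (true, b))
    (hu : (i, j) ∈ switchBoxes a b T) (hd : (i + 1, j) ∈ switchBoxes a b T) :
    T (i + 1, j) = some (true, b) := by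
  rcases hd with hd | hd
  swap
  · exact hd
  rcases hu with hu | hu
  · exact absurd hd (hT.2.2.2.1 i (i + 1) j a (by omega) hu)
  · exact absurd (antisymm hab (hT.2.2.1 i (i + 1) j _ _ i.le_succ hu hd)) (by simp)

theorem right_eq_unbarred (hT : IsColoredTableau r sh T) (hba : r (true, b) (false, a))
    (hl : (i, j) ∈ switchBoxes a b T) (hr : (i, j + 1) ∈ switchBoxes a b T) :
    T (i, j + 1) = some (false, a) := by
  rcases hr with hr | hr
  · exact hr
  rcases hl with hl | hl
  · exact absurd (antisymm hba (hT.2.1 i j (j + 1) _ _ j.le_succ hl hr)) (by simp)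
  · exact absurd hr (hT.2.2.2.2 i j (j + 1) b (by omega) hl)

theorem upper_eq_barred (hT : IsColoredTableau r sh T) (hba : r (true, b) (false, a))
    (hu : (i, j) ∈ switchBoxes a b T) (hd : (i + 1, j) ∈ switchBoxes a b T) :
    T (i, j) = some (true, b) := by
  rcases hu with hu | hu
  swap
  · exact hu
  rcases hd with hd | hd
  · exact absurd hd (hT.2.2.2.1 i (i + 1) j a (by omega) hu)
  · exact absurd (antisymm hba (hT.2.2.1 i (i + 1) j _ _ i.le_succ hu hd)) (by simp)

theorem eq_of_rightOrUpIn (hT : IsColoredTableau r sh T) (hab : r (false, a) (true, b))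
    {u v : ℕ × ℕ} (h : RightOrUpIn (switchBoxes a b T) u v) :
    T u = if v = (u.1, u.2 + 1) then some (false, a) else some (true, b) := by
  obtain ⟨hu, hv, hright | hup⟩ := h
  · subst hright
    simpa using hT.left_eq_unbarred hab hu hv
  · obtain ⟨i, j⟩ := v
    obtain rfl := hup
    simpa using hT.lower_eq_barred hab hv hu

theorem eq_of_rightOrUpIn_flip (hT : IsColoredTableau r sh T) (hba : r (true, b) (false, a))
    {u v : ℕ × ℕ} (h : RightOrUpIn (switchBoxes a b T) v u) :
    T u = if u = (v.1, v.2 + 1) then some (false, a) else some (true, b) := by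
  obtain ⟨hv, hu, hright | hup⟩ := h
  · subst hright
    simpa using hT.right_eq_unbarred hba hv hu
  · obtain ⟨i, j⟩ := u
    obtain rfl := hup
    simpa using hT.upper_eq_barred hba hu hv

theorem eqOn_switchBoxes (hT : IsColoredTableau r sh T) (hT' : IsColoredTableau r sh' T')
    (hcomp : r (false, a) (true, b) ∨ r (true, b) (false, a))
    (hsame : switchBoxes a b T = switchBoxes a b T')
    (hcount : ∀ c ∈ switchBoxes a b T,
      {d | ConnIn (switchBoxes a b T) c d ∧ T d = some (false, a)}.ncard =
      {d | ConnIn (switchBoxes a b T) c d ∧ T' d = some (false, a)}.ncard) :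
    Set.EqOn T T' (switchBoxes a b T) := by
  have hT'S : ∀ c ∈ switchBoxes a b T, T' c = some (false, a) ∨ T' c = some (true, b) :=
    fun c h => (hsame ▸ h : c ∈ switchBoxes a b T')
  rcases hcomp with hab | hba
  · refine eqOn_of_ncard_component_eq (hT.switchBoxes_finite a b) (P := RightOrUpIn _) ?_
      (fun _ hu _ hv h => RightOrUpIn.of_boxAdj hu hv h) (fun _ h => h) hT'S
      (fun u v h => ?_) hcount
    · intro u v w hv hw
      refine hv.eq_of_isRight_iff hw ?_
      have hval := (hT.eq_of_rightOrUpIn hab hv).symm.trans (hT.eq_of_rightOrUpIn hab hw)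
      split_ifs at hval <;> simp_all
    · rw [hT.eq_of_rightOrUpIn hab h, hT'.eq_of_rightOrUpIn hab (hsame ▸ h)]
  · refine eqOn_of_ncard_component_eq (hT.switchBoxes_finite a b) 
      (P := flip (RightOrUpIn _)) ?_ (fun _ hu _ hv h => (RightOrUpIn.of_boxAdj hu hv h).symm)
      (fun _ h => h) hT'S (fun u v h => ?_) hcount
    · intro u v w hv hw
      refine RightOrUpIn.eq_of_isLeft_iff hv hw ?_
      have hval :=
        (hT.eq_of_rightOrUpIn_flip hba hv).symm.trans (hT.eq_of_rightOrUpIn_flip hba hw)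
      split_ifs at hval <;> simp_all
    · rw [hT.eq_of_rightOrUpIn_flip hba h, hT'.eq_of_rightOrUpIn_flip hba (hsame ▸ h)]

end IsColoredTableau

theorem colored_tableau_determined_by_component_counts_general {n : ℕ}
    (r : Letter n → Letter n → Prop) (hr : IsLinExt r) (a b : Fin n)
    (sh : YoungDiagram) (T T' : Filling n)
    (hT : IsColoredTableau r sh T) (hT' : IsColoredTableau r sh T')
    (hswitch : TableauSwitch a b T T') : T = T' := by
  obtain ⟨hout, hsame, hcount⟩ := hswitch
  have := hr.1
  have hS : Set.EqOn T T' (switchBoxes a b T) :=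
    hT.eqOn_switchBoxes hT' (total_of r _ _) (Set.ext hsame) hcount
  funext c
  by_cases hc : c ∈ switchBoxes a b T
  exacts [hS hc, (hout c hc).symm]

/-- If `a` and `b̄` are adjacent in the total order `r`, and `T`, `T'` are
colored tableaux of the same shape w.r.t. `r` that agree outside the set `S` of boxes
containing `a` or `b̄`, have the same such set `S`, and the same number of `a`'s in each
edge-connected component of `S`, then `T = T'`. -/
theorem colored_tableau_determined_by_component_counts {n : ℕ}
    (r : Letter n → Letter n → Prop) (hr : IsLinExt r) (a b : Fin n)
    (hadj : AdjacentIn r (false, a) (true, b)) (sh : YoungDiagram) (T T' : Filling n)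
    (hT : IsColoredTableau r sh T) (hT' : IsColoredTableau r sh T')
    (hswitch : TableauSwitch a b T T') : T = T' :=
  colored_tableau_determined_by_component_counts_general r hr a b sh T T' hT hT' hswitch
end

section
/- Let < and ≺ be total orders on 𝒜ₙ that are both unbarred-tight, and let T (a colored tableau with respect to <) and T′ (a colored tableau with respect to ≺) be related by a single conversion switch. Then the unbarred reverse reading word u(T) is a ballot sequence if and only if u(T′) is a ballot sequence. -/
open scoped Classical

/-!
Only the letter `a` can change its count in a row. In `T` the boxes of `S = switchSet T a b`
in one row form a segment, and two consecutive rows of `S` meet in at most one column, whose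
lower box is `b̄` in `T` and whose upper box is `b̄` in `T'`. Hence a component of `S` is a
chain of linked rows, and since it holds as many `a`'s in `T` as in `T'`, the switch moves the
`b̄` of its top row (if any) to its bottom row. Above any row the two tableaux therefore differ
by at most one `a`, namely inside a chain whose top row has no `b̄` (`SwitchOpen`).

As each row is read in decreasing order, `u` is a ballot sequence iff for all consecutive
letters `c, d` and all `t` the rows `0, …, t` hold at most as many `d`'s as the rows
`0, …, t - 1` hold `c`'s. This can only fail for `(a, a + 1)` in `T'` and `(a - 1, a)` in `T`,
and along an open chain tightness provides one unit of slack: the `a + 1`'s in the lower of two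
linked rows of `T` sit below boxes of `S` other than the linking one, and dually for the
`a - 1`'s of `T'`.
-/

namespace IsLinExt

variable {n : ℕ} {ρ : Letter n → Letter n → Prop}

theorem refl (hρ : IsLinExt ρ) (x : Letter n) : ρ x x := by
  have := hρ.1; exact refl_of ρ x

theorem trans (hρ : IsLinExt ρ) {x y z : Letter n} (hxy : ρ x y) (hyz : ρ y z) : ρ x z := by
  have := hρ.1; exact trans_of ρ hxy hyz

theorem antisymm (hρ : IsLinExt ρ) {x y : Letter n} (hxy : ρ x y) (hyx : ρ y x) : x = y := by
  have := hρ.1; exact _root_.antisymm hxy hyx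

theorem total (hρ : IsLinExt ρ) (x y : Letter n) : ρ x y ∨ ρ y x := by
  have := hρ.1; exact total_of ρ x y

theorem unbarred_iff (hρ : IsLinExt ρ) {i j : Fin n} : ρ (false, i) (false, j) ↔ i ≤ j := by
  refine ⟨fun h => not_lt.1 fun hji => ?_, hρ.2 false i j⟩
  have := hρ.antisymm h (hρ.2 false j i hji.le)
  simp only [Prod.mk.injEq, true_and] at this
  exact hji.ne' this

end IsLinExt

namespace UnbarredTight

variable {n : ℕ} {ρ : Letter n → Letter n → Prop}

theorem eq_of_between (hρ : IsLinExt ρ) (hut : UnbarredTight ρ) {c d : Fin n}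
    (hcd : c.val + 1 = d.val) {w : Letter n} {b : Fin n}
    (hw : Between ρ (false, c) (false, d) w) (hb : Between ρ (false, c) (false, d) (true, b)) :
    w = (true, b) := by
  obtain ⟨c, hc⟩ := c
  obtain ⟨d, hd⟩ := d
  obtain rfl : d = c + 1 := hcd.symm
  obtain ⟨_ | _, k⟩ := w
  · have h₁ := hρ.unbarred_iff.1 hw.1
    have h₂ := hρ.unbarred_iff.1 hw.2.1
    have hne₁ : k ≠ ⟨c, hc⟩ := fun h => hw.2.2.1 (by rw [h])
    have hne₂ : k ≠ ⟨c + 1, hd⟩ := fun h => hw.2.2.2 (by rw [h])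
    rw [Fin.le_def] at h₁ h₂
    rw [Ne, Fin.ext_iff] at hne₁ hne₂
    simp only at h₁ h₂ hne₁ hne₂
    omega
  · rw [hut c hd k b hw hb]

end UnbarredTight

namespace CoveredBy

variable {n : ℕ} {ρ : Letter n → Letter n → Prop} {x y z : Letter n} {a b c d : Fin n}

theorem le_of_lt (hρ : IsLinExt ρ) (hxy : CoveredBy ρ x y) (hxz : ρ x z) (hzx : z ≠ x) :
    ρ y z := by
  obtain rfl | hzy := eq_or_ne z y
  · exact hρ.refl z
  exact (hρ.total y z).resolve_right fun hzy' => (hxy.2.2 z hxz hzy').elim hzx hzy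

theorem ge_of_gt (hρ : IsLinExt ρ) (hxy : CoveredBy ρ x y) (hzy : ρ z y) (hzy' : z ≠ y) :
    ρ z x := by
  obtain rfl | hzx := eq_or_ne z x
  · exact hρ.refl z
  exact (hρ.total z x).resolve_right fun hxz => (hxy.2.2 z hxz hzy).elim hzx hzy'

theorem bar_le_succ (hρ : IsLinExt ρ) (hab : CoveredBy ρ (false, a) (true, b))
    (had : a.val + 1 = d.val) : ρ (true, b) (false, d) :=
  hab.le_of_lt hρ (hρ.2 false a d (by rw [Fin.le_def]; omega)) (by simp [Fin.ext_iff]; omega)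

theorem succ_le_of_le (hρ : IsLinExt ρ) (hut : UnbarredTight ρ)
    (hab : CoveredBy ρ (false, a) (true, b)) (had : a.val + 1 = d.val) {z : Letter n}
    (hz : ρ (false, a) z) (hza : z ≠ (false, a)) (hzb : z ≠ (true, b)) : ρ (false, d) z := by
  obtain rfl | hzd' := eq_or_ne z (false, d)
  · exact hρ.refl _
  refine (hρ.total (false, d) z).resolve_right fun hzd => ?_
  exact hzb (hut.eq_of_between hρ had ⟨hz, hzd, hza, hzd'⟩
    ⟨hab.1, hab.bar_le_succ hρ had, by simp, by simp⟩)

theorem pred_le_bar (hρ : IsLinExt ρ) (hba : CoveredBy ρ (true, b) (false, a))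
    (hca : c.val + 1 = a.val) : ρ (false, c) (true, b) :=
  hba.ge_of_gt hρ (hρ.2 false c a (by rw [Fin.le_def]; omega)) (by simp [Fin.ext_iff]; omega)

theorem le_pred_of_le (hρ : IsLinExt ρ) (hut : UnbarredTight ρ)
    (hba : CoveredBy ρ (true, b) (false, a)) (hca : c.val + 1 = a.val) {z : Letter n}
    (hz : ρ z (false, a)) (hza : z ≠ (false, a)) (hzb : z ≠ (true, b)) : ρ z (false, c) := by
  obtain rfl | hzc := eq_or_ne z (false, c)
  · exact hρ.refl _
  refine (hρ.total (false, c) z).resolve_left fun hcz => ?_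
  exact hzb (hut.eq_of_between hρ hca ⟨hcz, hz, hzc, hza⟩
    ⟨hba.pred_le_bar hρ hca, hba.1, by simp, by simp⟩)

end CoveredBy

section Rows

variable {n : ℕ} {ρ : Letter n → Letter n → Prop} {sh : YoungDiagram} {U : Filling n}
  {a b : Fin n}

def switchSet (U : Filling n) (a b : Fin n) : Set (ℕ × ℕ) :=
  {c | U c = some (false, a) ∨ U c = some (true, b)}

def RowsLinked (U : Filling n) (a b : Fin n) (x : ℕ) : Prop :=
  ∃ j, (x, j) ∈ switchSet U a b ∧ (x + 1, j) ∈ switchSet U a b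

noncomputable def rowCount (sh : YoungDiagram) (U : Filling n) (v : Letter n) (x : ℕ) : ℕ :=
  ((Finset.range (sh.rowLen x)).filter fun j => U (x, j) = some v).card

noncomputable def countAbove (sh : YoungDiagram) (U : Filling n) (v : Letter n) (t : ℕ) : ℕ :=
  ∑ x ∈ Finset.range t, rowCount sh U v x

theorem countAbove_succ (v : Letter n) (t : ℕ) :
    countAbove sh U v (t + 1) = countAbove sh U v t + rowCount sh U v t :=
  Finset.sum_range_succ _ _

theorem IsColoredTableau.mem_of_eq_some (hU : IsColoredTableau ρ sh U) {c : ℕ × ℕ}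
    {v : Letter n} (h : U c = some v) : c ∈ sh :=
  (hU.1 c).1 (by simp [h])

theorem IsColoredTableau.lt_rowLen (hU : IsColoredTableau ρ sh U) {x j : ℕ} {v : Letter n}
    (h : U (x, j) = some v) : j < sh.rowLen x :=
  YoungDiagram.mem_iff_lt_rowLen.1 (hU.mem_of_eq_some h)

theorem IsColoredTableau.exists_eq_some (hU : IsColoredTableau ρ sh U) {c : ℕ × ℕ}
    (hc : c ∈ sh) : ∃ v, U c = some v :=
  Option.isSome_iff_exists.1 ((hU.1 c).2 hc)

theorem IsColoredTableau.mem_of_mem_switchSet (hU : IsColoredTableau ρ sh U) {c : ℕ × ℕ}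
    (hc : c ∈ switchSet U a b) : c ∈ sh := by
  rcases hc with h | h <;> exact hU.mem_of_eq_some h

theorem rowCount_bar_le_one (hU : IsColoredTableau ρ sh U) (x : ℕ) :
    rowCount sh U (true, b) x ≤ 1 :=
  Finset.card_le_one.2 fun j hj j' hj' => by
    simp only [Finset.mem_filter] at hj hj'
    by_contra hne
    exact hU.2.2.2.2 x j j' b hne hj.2 hj'.2

theorem rowCount_bar_eq_one (hU : IsColoredTableau ρ sh U) {x j : ℕ}
    (h : U (x, j) = some (true, b)) : rowCount sh U (true, b) x = 1 :=
  (rowCount_bar_le_one hU x).antisymm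
    (Finset.card_pos.2 ⟨j, by simp [h, hU.lt_rowLen h]⟩)

theorem rowCount_add_rowCount (sh : YoungDiagram) (U : Filling n) (a b : Fin n) (x : ℕ) :
    rowCount sh U (false, a) x + rowCount sh U (true, b) x =
      ((Finset.range (sh.rowLen x)).filter fun j => (x, j) ∈ switchSet U a b).card := by
  rw [rowCount, rowCount, ← Finset.card_union_of_disjoint, ← Finset.filter_or]
  · exact congrArg Finset.card (Finset.filter_congr fun _ _ => Iff.rfl)
  · exact Finset.disjoint_filter.2 fun j _ h₁ h₂ => by simp [h₁] at h₂

end Rows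

theorem BoxAdj.symm {c d : ℕ × ℕ} (h : BoxAdj c d) : BoxAdj d c := by
  unfold BoxAdj at *
  omega

theorem ConnIn.symm {S : Set (ℕ × ℕ)} {c d : ℕ × ℕ} (h : ConnIn S c d) :
    ConnIn S d c := by
  induction h with
  | refl => exact .refl
  | tail _ hst ih => exact .head ⟨hst.2.1, hst.1, hst.2.2.symm⟩ ih

theorem exists_top_of_chain (P : ℕ → Prop) (t : ℕ) :
    ∃ i ≤ t, (∀ u, u + 1 = i → ¬P u) ∧ ∀ x, i ≤ x → x < t → P x := by
  induction t with
  | zero => exact ⟨0, le_rfl, fun u hu => by omega, fun x _ hx => by omega⟩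
  | succ t ih =>
    by_cases ht : P t
    · obtain ⟨i, hit, htop, hchain⟩ := ih
      refine ⟨i, by omega, htop, fun x hix hxt => ?_⟩
      rcases Nat.lt_succ_iff_lt_or_eq.1 hxt with hxt | rfl
      exacts [hchain x hix hxt, ht]
    · exact ⟨t + 1, le_rfl, fun u hu => by cases hu; exact ht, fun x hx hx' => by omega⟩

section Geometry

variable {n : ℕ} {ρ : Letter n → Letter n → Prop} {sh : YoungDiagram} {U : Filling n}
  {a b c d : Fin n}

theorem mem_switchSet_of_le_of_le (hρ : IsLinExt ρ) (hab : CoveredBy ρ (false, a) (true, b))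
    (hU : IsColoredTableau ρ sh U) {x j₁ j j₂ : ℕ} (h₁ : j₁ ≤ j) (h₂ : j ≤ j₂)
    (hj₁ : (x, j₁) ∈ switchSet U a b) (hj₂ : (x, j₂) ∈ switchSet U a b) :
    (x, j) ∈ switchSet U a b := by
  obtain ⟨v, hv⟩ :=
    hU.exists_eq_some (sh.up_left_mem le_rfl h₂ (hU.mem_of_mem_switchSet hj₂))
  have hav : ρ (false, a) v := by
    rcases hj₁ with h | h
    · exact hU.2.1 x j₁ j _ _ h₁ h hv
    · exact hρ.trans hab.1 (hU.2.1 x j₁ j _ _ h₁ h hv)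
  have hvb : ρ v (true, b) := by
    rcases hj₂ with h | h
    · exact hρ.trans (hU.2.1 x j j₂ _ _ h₂ hv h) hab.1
    · exact hU.2.1 x j j₂ _ _ h₂ hv h
  rcases hab.2.2 v hav hvb with rfl | rfl
  exacts [Or.inl hv, Or.inr hv]

theorem connIn_of_mem_row (hρ : IsLinExt ρ) (hab : CoveredBy ρ (false, a) (true, b))
    (hU : IsColoredTableau ρ sh U) {x j₁ j₂ : ℕ} (hj₁ : (x, j₁) ∈ switchSet U a b)
    (hj₂ : (x, j₂) ∈ switchSet U a b) : ConnIn (switchSet U a b) (x, j₁) (x, j₂) := by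
  wlog h : j₁ ≤ j₂ generalizing j₁ j₂
  · exact (this hj₂ hj₁ (by omega)).symm
  obtain ⟨k, rfl⟩ := Nat.exists_eq_add_of_le h
  induction k with
  | zero => exact .refl
  | succ k ih =>
    have hk : (x, j₁ + k) ∈ switchSet U a b :=
      mem_switchSet_of_le_of_le hρ hab hU (by omega) (by omega) hj₁ hj₂
    exact .tail (ih hk (by omega)) ⟨hk, hj₂, Or.inl ⟨rfl, Or.inl rfl⟩⟩

theorem eq_bar_of_mem_switchSet_succ (hρ : IsLinExt ρ) (hab : CoveredBy ρ (false, a) (true, b))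
    (hU : IsColoredTableau ρ sh U) {x j : ℕ} (h₀ : (x, j) ∈ switchSet U a b)
    (h₁ : (x + 1, j) ∈ switchSet U a b) : U (x + 1, j) = some (true, b) := by
  refine h₁.resolve_left fun h₁ => ?_
  rcases h₀ with h₀ | h₀
  · exact hU.2.2.2.1 x (x + 1) j a (by omega) h₀ h₁
  · exact hab.2.1 (hρ.antisymm hab.1 (hU.2.2.1 x (x + 1) j _ _ (by omega) h₀ h₁))

theorem eq_bar_of_mem_switchSet_succ' (hρ : IsLinExt ρ) (hba : CoveredBy ρ (true, b) (false, a))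
    (hU : IsColoredTableau ρ sh U) {x j : ℕ} (h₀ : (x, j) ∈ switchSet U a b)
    (h₁ : (x + 1, j) ∈ switchSet U a b) : U (x, j) = some (true, b) := by
  refine h₀.resolve_left fun h₀ => ?_
  rcases h₁ with h₁ | h₁
  · exact hU.2.2.2.1 x (x + 1) j a (by omega) h₀ h₁
  · exact hba.2.1 (hρ.antisymm hba.1 (hU.2.2.1 x (x + 1) j _ _ (by omega) h₀ h₁))

/-- The `d`'s of row `x + 1` lie below boxes of `S` strictly right of the linking column. -/
theorem rowCount_succ_add_one_le (hρ : IsLinExt ρ) (hut : UnbarredTight ρ)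
    (hab : CoveredBy ρ (false, a) (true, b)) (had : a.val + 1 = d.val)
    (hU : IsColoredTableau ρ sh U) {x : ℕ} (hl : RowsLinked U a b x) :
    rowCount sh U (false, d) (x + 1) + 1 ≤
      rowCount sh U (false, a) x + rowCount sh U (true, b) x := by
  obtain ⟨j, h₀, h₁⟩ := hl
  have hbar := eq_bar_of_mem_switchSet_succ hρ hab hU h₀ h₁
  have hj : j ∉ (Finset.range (sh.rowLen (x + 1))).filter
      fun j => U (x + 1, j) = some (false, d) := by simp [hbar]
  rw [rowCount_add_rowCount, rowCount, ← Finset.card_insert_of_notMem hj]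
  refine Finset.card_le_card fun j' hj' => ?_
  simp only [Finset.mem_insert, Finset.mem_filter, Finset.mem_range] at hj' ⊢
  rcases hj' with rfl | ⟨-, hd⟩
  · exact ⟨YoungDiagram.mem_iff_lt_rowLen.1 (hU.mem_of_mem_switchSet h₀), h₀⟩
  have hjj' : j ≤ j' := by
    by_contra! hlt
    have := hρ.antisymm (hU.2.1 (x + 1) j' j _ _ hlt.le hd hbar) (hab.bar_le_succ hρ had)
    simp at this
  have hmem := sh.up_left_mem (Nat.le_succ x) le_rfl (hU.mem_of_eq_some hd)
  obtain ⟨v, hv⟩ := hU.exists_eq_some hmem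
  refine ⟨YoungDiagram.mem_iff_lt_rowLen.1 hmem, ?_⟩
  by_contra hvS
  have hav : ρ (false, a) v := by
    rcases h₀ with h | h
    · exact hU.2.1 x j j' _ _ hjj' h hv
    · exact hρ.trans hab.1 (hU.2.1 x j j' _ _ hjj' h hv)
  have hdv := hab.succ_le_of_le hρ hut had hav (fun h => hvS (Or.inl (h ▸ hv)))
    (fun h => hvS (Or.inr (h ▸ hv)))
  have hvd := hρ.antisymm (hU.2.2.1 x (x + 1) j' _ _ (Nat.le_succ x) hv hd) hdv
  exact hU.2.2.2.1 x (x + 1) j' d (by omega) (hvd ▸ hv) hd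

/-- The `c`'s of row `x` lie above boxes of `S` strictly left of the linking column. -/
theorem rowCount_pred_add_one_le (hρ : IsLinExt ρ) (hut : UnbarredTight ρ)
    (hba : CoveredBy ρ (true, b) (false, a)) (hca : c.val + 1 = a.val)
    (hU : IsColoredTableau ρ sh U) {x : ℕ} (hl : RowsLinked U a b x) :
    rowCount sh U (false, c) x + 1 ≤
      rowCount sh U (false, a) (x + 1) + rowCount sh U (true, b) (x + 1) := by
  obtain ⟨j, h₀, h₁⟩ := hl
  have hbar := eq_bar_of_mem_switchSet_succ' hρ hba hU h₀ h₁
  have hj : j ∉ (Finset.range (sh.rowLen x)).filter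
      fun j => U (x, j) = some (false, c) := by simp [hbar]
  rw [rowCount_add_rowCount, rowCount, ← Finset.card_insert_of_notMem hj]
  refine Finset.card_le_card fun j' hj' => ?_
  simp only [Finset.mem_insert, Finset.mem_filter, Finset.mem_range] at hj' ⊢
  rcases hj' with rfl | ⟨-, hc⟩
  · exact ⟨YoungDiagram.mem_iff_lt_rowLen.1 (hU.mem_of_mem_switchSet h₁), h₁⟩
  have hjj' : j' ≤ j := by
    by_contra! hlt
    have := hρ.antisymm (hU.2.1 x j j' _ _ hlt.le hbar hc) (hba.pred_le_bar hρ hca)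
    simp at this
  have hmem := sh.up_left_mem le_rfl hjj' (hU.mem_of_mem_switchSet h₁)
  obtain ⟨v, hv⟩ := hU.exists_eq_some hmem
  refine ⟨YoungDiagram.mem_iff_lt_rowLen.1 hmem, ?_⟩
  by_contra hvS
  have hva : ρ v (false, a) := by
    rcases h₁ with h | h
    · exact hU.2.1 (x + 1) j' j _ _ hjj' hv h
    · exact hρ.trans (hU.2.1 (x + 1) j' j _ _ hjj' hv h) hba.1
  have hvc := hba.le_pred_of_le hρ hut hca hva (fun h => hvS (Or.inl (h ▸ hv)))
    (fun h => hvS (Or.inr (h ▸ hv)))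
  have hcv := hρ.antisymm hvc (hU.2.2.1 x (x + 1) j' _ _ (Nat.le_succ x) hc hv)
  exact hU.2.2.2.1 x (x + 1) j' c (by omega) hc (hcv ▸ hv)

theorem connIn_of_forall_rowsLinked (hρ : IsLinExt ρ) (hab : CoveredBy ρ (false, a) (true, b))
    (hU : IsColoredTableau ρ sh U) {x y j k : ℕ} (hxy : x ≤ y)
    (hchain : ∀ z, x ≤ z → z < y → RowsLinked U a b z)
    (hp : (x, j) ∈ switchSet U a b) (hq : (y, k) ∈ switchSet U a b) :
    ConnIn (switchSet U a b) (x, j) (y, k) := by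
  induction y, hxy using Nat.le_induction generalizing k with
  | base => exact connIn_of_mem_row hρ hab hU hp hq
  | succ y hxy ih =>
    obtain ⟨l, hl₀, hl₁⟩ := hchain y hxy (by omega)
    have hdown : ConnIn (switchSet U a b) (y, l) (y + 1, l) :=
      .single ⟨hl₀, hl₁, Or.inr ⟨rfl, Or.inl rfl⟩⟩
    exact ((ih (fun z hz hzy => hchain z hz (by omega)) hl₀).trans hdown).trans
      (connIn_of_mem_row hρ hab hU hl₁ hq)

theorem connIn_iff_of_chain (hρ : IsLinExt ρ) (hab : CoveredBy ρ (false, a) (true, b))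
    (hU : IsColoredTableau ρ sh U) {i t : ℕ} (htop : ∀ u, u + 1 = i → ¬RowsLinked U a b u)
    (hchain : ∀ x, i ≤ x → x < t → RowsLinked U a b x) (hbot : ¬RowsLinked U a b t)
    {c : ℕ × ℕ} (hc : c ∈ switchSet U a b) (hic : i ≤ c.1) (hct : c.1 ≤ t)
    (e : ℕ × ℕ) :
    ConnIn (switchSet U a b) c e ↔ e ∈ switchSet U a b ∧ i ≤ e.1 ∧ e.1 ≤ t := by
  constructor
  · intro h
    induction h with
    | refl => exact ⟨hc, hic, hct⟩
    | @tail m e _ hst ih =>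
      obtain ⟨hm, he, hadj⟩ := hst
      obtain ⟨-, him, hmt⟩ := ih
      obtain ⟨m₁, m₂⟩ := m
      obtain ⟨e₁, e₂⟩ := e
      simp only [BoxAdj] at hadj him hmt ⊢
      refine ⟨he, ?_⟩
      rcases hadj with ⟨rfl, -⟩ | ⟨rfl, rfl | rfl⟩
      · exact ⟨him, hmt⟩
      · have : m₁ ≠ t := fun h => hbot (h ▸ ⟨m₂, hm, he⟩)
        omega
      · have : e₁ + 1 ≠ i := fun h => htop e₁ h ⟨m₂, he, hm⟩
        omega
  · rintro ⟨he, hie, het⟩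
    obtain ⟨x, j⟩ := c
    obtain ⟨y, k⟩ := e
    dsimp only at hic hct hie het
    rcases le_total x y with hxy | hyx
    · exact connIn_of_forall_rowsLinked hρ hab hU hxy
        (fun z hz hzy => hchain z (by omega) (by omega)) hc he
    · exact (connIn_of_forall_rowsLinked hρ hab hU hyx
        (fun z hz hzy => hchain z (by omega) (by omega)) he hc).symm

end Geometry

theorem ncard_eq_sum_rowCount {n : ℕ} {sh : YoungDiagram} {U : Filling n} {v : Letter n}
    (hU : ∀ e, U e = some v → e ∈ sh) (s : Finset ℕ) :
    {e : ℕ × ℕ | e.1 ∈ s ∧ U e = some v}.ncard = ∑ x ∈ s, rowCount sh U v x := by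
  have hset : {e : ℕ × ℕ | e.1 ∈ s ∧ U e = some v} = ↑(s.biUnion fun x =>
      ((Finset.range (sh.rowLen x)).filter fun j => U (x, j) = some v).image (Prod.mk x)) := by
    ext ⟨x, j⟩
    simp only [Set.mem_ofPred_eq, Finset.coe_biUnion, Finset.mem_coe, Set.mem_iUnion,
      Finset.mem_image, Finset.mem_filter, Finset.mem_range, Prod.mk.injEq]
    constructor
    · rintro ⟨hx, h⟩
      exact ⟨x, hx, j, ⟨YoungDiagram.mem_iff_lt_rowLen.1 (hU _ h), h⟩, rfl, rfl⟩
    · rintro ⟨x, hx, j, ⟨-, h⟩, rfl, rfl⟩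
      exact ⟨hx, h⟩
  rw [hset, Set.ncard_coe_finset, Finset.card_biUnion]
  · exact Finset.sum_congr rfl fun x _ =>
      Finset.card_image_of_injective _ (Prod.mk_right_injective x)
  · intro x _ y _ hxy
    simp only [Function.onFun, Finset.disjoint_left, Finset.mem_image]
    rintro _ ⟨j, -, rfl⟩ ⟨k, -, h⟩
    exact hxy (Prod.mk.inj h).1.symm

/-- `SwitchOpen sh T a b t`: rows `t - 1` and `t` are linked, and the top row of their chain
of linked rows contains no `b̄`. -/
def SwitchOpen {n : ℕ} (sh : YoungDiagram) (T : Filling n) (a b : Fin n) : ℕ → Prop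
  | 0 => False
  | t + 1 => RowsLinked T a b t ∧ (SwitchOpen sh T a b t ∨ rowCount sh T (true, b) t = 0)

def BallotAt {n : ℕ} (sh : YoungDiagram) (U : Filling n) (c d : Fin n) : Prop :=
  ∀ t, countAbove sh U (false, d) (t + 1) ≤ countAbove sh U (false, c) t

section SwitchOpen

variable {n : ℕ} {r : Letter n → Letter n → Prop} {sh : YoungDiagram} {T : Filling n}
  {a b d : Fin n}

theorem rowCount_bar_eq_one_of_switchOpen (hr : IsLinExt r)
    (hab : CoveredBy r (false, a) (true, b)) (hT : IsColoredTableau r sh T) :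
    ∀ {t : ℕ}, SwitchOpen sh T a b t → rowCount sh T (true, b) t = 1
  | 0, h => h.elim
  | _ + 1, h => by
    obtain ⟨j, h₀, h₁⟩ := h.1
    exact rowCount_bar_eq_one hT (eq_bar_of_mem_switchSet_succ hr hab hT h₀ h₁)

theorem countAbove_succ_lt_of_switchOpen (hr : IsLinExt r) (hut : UnbarredTight r)
    (hab : CoveredBy r (false, a) (true, b)) (hT : IsColoredTableau r sh T)
    (had : a.val + 1 = d.val) (hball : BallotAt sh T a d) :
    ∀ {t : ℕ}, SwitchOpen sh T a b t →
      countAbove sh T (false, d) (t + 1) < countAbove sh T (false, a) t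
  | 0, h => h.elim
  | t + 1, ⟨hl, ho⟩ => by
    have hrow := rowCount_succ_add_one_le hr hut hab had hT hl
    rw [countAbove_succ (false, d) (t + 1), countAbove_succ (false, a) t]
    rcases ho with ho | ho
    · have := countAbove_succ_lt_of_switchOpen hr hut hab hT had hball ho
      have := rowCount_bar_le_one (b := b) hT t
      omega
    · have := hball t
      omega

end SwitchOpen

namespace TableauSwitch

variable {n : ℕ} {r r' : Letter n → Letter n → Prop} {sh : YoungDiagram} {T T' : Filling n}
  {a b c d : Fin n}

theorem switchSet_eq (hts : TableauSwitch a b T T') : switchSet T' a b = switchSet T a b :=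
  Set.ext fun c => (hts.2.1 c).symm

theorem rowsLinked_iff (hts : TableauSwitch a b T T') {x : ℕ} :
    RowsLinked T' a b x ↔ RowsLinked T a b x := by
  rw [RowsLinked, RowsLinked, hts.switchSet_eq]

theorem rowCount_add_rowCount_eq (hts : TableauSwitch a b T T') (x : ℕ) :
    rowCount sh T (false, a) x + rowCount sh T (true, b) x =
      rowCount sh T' (false, a) x + rowCount sh T' (true, b) x := by
  rw [rowCount_add_rowCount, rowCount_add_rowCount, hts.switchSet_eq]

theorem eq_unbarred_iff (hts : TableauSwitch a b T T') {z : Fin n} (hz : z ≠ a)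
    (c : ℕ × ℕ) : T' c = some (false, z) ↔ T c = some (false, z) := by
  by_cases hc : c ∈ switchSet T a b
  · have hc' : c ∈ switchSet T' a b := hts.switchSet_eq ▸ hc
    constructor <;> intro h
    · rcases hc' with h' | h' <;> simp_all
    · rcases hc with h' | h' <;> simp_all
  · rw [hts.1 c hc]

theorem countAbove_eq_of_ne (hts : TableauSwitch a b T T') {z : Fin n} (hz : z ≠ a)
    (t : ℕ) : countAbove sh T' (false, z) t = countAbove sh T (false, z) t :=
  Finset.sum_congr rfl fun x _ => congrArg Finset.card <|
    Finset.filter_congr fun j _ => hts.eq_unbarred_iff hz (x, j)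

theorem sum_rowCount_eq_of_chain (hr : IsLinExt r) (hab : CoveredBy r (false, a) (true, b))
    (hT : IsColoredTableau r sh T) (hts : TableauSwitch a b T T') {i t : ℕ} (hit : i ≤ t)
    (htop : ∀ u, u + 1 = i → ¬RowsLinked T a b u)
    (hchain : ∀ x, i ≤ x → x < t → RowsLinked T a b x) (hbot : ¬RowsLinked T a b t) :
    ∑ x ∈ Finset.Ico i (t + 1), rowCount sh T (false, a) x =
      ∑ x ∈ Finset.Ico i (t + 1), rowCount sh T' (false, a) x := by
  have hS' : ∀ e, T' e = some (false, a) → e ∈ switchSet T a b :=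
    fun e h => (hts.2.1 e).2 (Or.inl h)
  by_cases hrow : ∃ j, (i, j) ∈ switchSet T a b
  · obtain ⟨j, hj⟩ := hrow
    have hcomp := connIn_iff_of_chain hr hab hT htop hchain hbot hj le_rfl hit
    have hset : ∀ V : Filling n, (∀ e, V e = some (false, a) → e ∈ switchSet T a b) →
        {e | ConnIn (switchSet T a b) (i, j) e ∧ V e = some (false, a)} =
          {e : ℕ × ℕ | e.1 ∈ Finset.Ico i (t + 1) ∧ V e = some (false, a)} := by
      intro V hV
      ext e
      simp only [Set.mem_ofPred_eq, hcomp, Finset.mem_Ico]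
      exact ⟨fun ⟨⟨_, h₁, h₂⟩, h⟩ => ⟨⟨h₁, by omega⟩, h⟩,
        fun ⟨⟨h₁, h₂⟩, h⟩ => ⟨⟨hV e h, h₁, by omega⟩, h⟩⟩
    have key := hts.2.2 (i, j) hj
    rw [show {e | T e = some (false, a) ∨ T e = some (true, b)} = switchSet T a b from rfl,
      hset T fun e h => Or.inl h, hset T' hS'] at key
    rwa [ncard_eq_sum_rowCount (fun e h => hT.mem_of_eq_some h),
      ncard_eq_sum_rowCount (fun e h => hT.mem_of_mem_switchSet (hS' e h))] at key
  · obtain rfl : i = t := by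
      by_contra hne
      obtain ⟨j, hj, -⟩ := hchain i le_rfl (by omega)
      exact hrow ⟨j, hj⟩
    have hzero : ∀ V : Filling n, (∀ e, V e = some (false, a) → e ∈ switchSet T a b) →
        rowCount sh V (false, a) i = 0 := fun V hV =>
      Finset.card_eq_zero.2 (Finset.filter_eq_empty_iff.2 fun j _ h => hrow ⟨j, hV _ h⟩)
    simp [hzero T fun e h => Or.inl h, hzero T' hS']

theorem countAbove_eq (hr : IsLinExt r) (hab : CoveredBy r (false, a) (true, b))
    (hT : IsColoredTableau r sh T) (hr' : IsLinExt r') (hba : CoveredBy r' (true, b) (false, a))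
    (hT' : IsColoredTableau r' sh T') (hts : TableauSwitch a b T T') (t : ℕ) :
    countAbove sh T (false, a) t =
      countAbove sh T' (false, a) t + if SwitchOpen sh T a b t then 1 else 0 := by
  induction t using Nat.strong_induction_on with
  | _ t ih =>
  rcases t with _ | t
  · simp [countAbove, SwitchOpen]
  by_cases hl : RowsLinked T a b t
  · obtain ⟨j, h₀, h₁⟩ := hts.rowsLinked_iff.2 hl
    have hbar' := rowCount_bar_eq_one hT' (eq_bar_of_mem_switchSet_succ' hr' hba hT' h₀ h₁)
    have hrow := hts.rowCount_add_rowCount_eq (sh := sh) t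
    simp only [SwitchOpen, hl, true_and, countAbove_succ, ih t (Nat.lt_succ_self t)]
    by_cases ho : SwitchOpen sh T a b t
    · have hbar := rowCount_bar_eq_one_of_switchOpen hr hab hT ho
      simp only [ho, true_or, if_true]
      omega
    · have hle := rowCount_bar_le_one (b := b) hT t
      by_cases hb : rowCount sh T (true, b) t = 0 <;>
        simp only [ho, hb, or_true, or_false, if_true, if_false] <;> omega
  · obtain ⟨i, hit, htop, hchain⟩ := exists_top_of_chain (RowsLinked T a b) t
    have hsum := hts.sum_rowCount_eq_of_chain hr hab hT hit htop hchain hl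
    have hi := ih i (by omega)
    have hclosed : ¬SwitchOpen sh T a b i := by
      rcases i with _ | u
      exacts [id, fun h => htop u rfl h.1]
    simp only [SwitchOpen, hl, false_and, if_false, hclosed, add_zero] at hi ⊢
    rw [countAbove, countAbove, ← Finset.sum_range_add_sum_Ico _ (by omega : i ≤ t + 1),
      ← Finset.sum_range_add_sum_Ico _ (by omega : i ≤ t + 1), hsum]
    exact congrArg (· + _) hi

theorem countAbove_le (hr : IsLinExt r) (hab : CoveredBy r (false, a) (true, b))
    (hT : IsColoredTableau r sh T) (hr' : IsLinExt r') (hba : CoveredBy r' (true, b) (false, a))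
    (hT' : IsColoredTableau r' sh T') (hts : TableauSwitch a b T T') (t : ℕ) :
    countAbove sh T' (false, a) t ≤ countAbove sh T (false, a) t := by
  rw [hts.countAbove_eq hr hab hT hr' hba hT' t]
  exact Nat.le_add_right _ _

theorem rowCount_bar_eq_zero_of_switchOpen (hr : IsLinExt r)
    (hab : CoveredBy r (false, a) (true, b)) (hT : IsColoredTableau r sh T) (hr' : IsLinExt r')
    (hba : CoveredBy r' (true, b) (false, a)) (hT' : IsColoredTableau r' sh T')
    (hts : TableauSwitch a b T T') {t : ℕ} (ho : SwitchOpen sh T a b t)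
    (ho' : ¬SwitchOpen sh T a b (t + 1)) : rowCount sh T' (true, b) t = 0 := by
  have h := hts.countAbove_eq hr hab hT hr' hba hT' t
  have h' := hts.countAbove_eq hr hab hT hr' hba hT' (t + 1)
  rw [if_pos ho] at h
  rw [if_neg ho', countAbove_succ, countAbove_succ] at h'
  have hrow := hts.rowCount_add_rowCount_eq (sh := sh) t
  have hle := rowCount_bar_le_one (b := b) hT t
  omega

theorem countAbove_succ_lt_of_switchOpen_succ (hr : IsLinExt r)
    (hab : CoveredBy r (false, a) (true, b)) (hT : IsColoredTableau r sh T) (hr' : IsLinExt r')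
    (hut' : UnbarredTight r') (hba : CoveredBy r' (true, b) (false, a))
    (hT' : IsColoredTableau r' sh T') (hts : TableauSwitch a b T T') (hca : c.val + 1 = a.val)
    (hball : BallotAt sh T' c a) {t : ℕ} (ho : SwitchOpen sh T a b (t + 1)) :
    countAbove sh T' (false, a) (t + 1) < countAbove sh T' (false, c) t := by
  -- downward induction on `t`, starting below the last row of `sh`, which is linked to nothing
  suffices h : ∀ k t, sh.colLen 0 ≤ t + k → SwitchOpen sh T a b (t + 1) →
      countAbove sh T' (false, a) (t + 1) < countAbove sh T' (false, c) t from
    h _ t (Nat.le_add_left _ _) ho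
  intro k
  induction k with
  | zero =>
    intro t ht ho
    obtain ⟨j, hj, -⟩ := ho.1
    have := YoungDiagram.mem_iff_lt_colLen.1 (sh.up_left_mem le_rfl (Nat.zero_le j)
      (hT.mem_of_mem_switchSet hj))
    omega
  | succ k ih =>
    intro t ht ho
    have hrow := rowCount_pred_add_one_le hr' hut' hba hca hT' (hts.rowsLinked_iff.2 ho.1)
    have ha := countAbove_succ (sh := sh) (U := T') (false, a) (t + 1)
    have hc := countAbove_succ (sh := sh) (U := T') (false, c) t
    by_cases ho' : SwitchOpen sh T a b (t + 1 + 1)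
    · have := ih (t + 1) (by omega) ho'
      have := rowCount_bar_le_one (b := b) hT' (t + 1)
      omega
    · have := hts.rowCount_bar_eq_zero_of_switchOpen hr hab hT hr' hba hT' ho ho'
      have := hball (t + 1)
      omega

theorem ballotAt_iff (hr : IsLinExt r) (hut : UnbarredTight r)
    (hab : CoveredBy r (false, a) (true, b)) (hT : IsColoredTableau r sh T) (hr' : IsLinExt r')
    (hut' : UnbarredTight r') (hba : CoveredBy r' (true, b) (false, a))
    (hT' : IsColoredTableau r' sh T') (hts : TableauSwitch a b T T') (hcd : c.val + 1 = d.val) :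
    BallotAt sh T c d ↔ BallotAt sh T' c d := by
  have hle := hts.countAbove_le hr hab hT hr' hba hT'
  by_cases hca : c = a
  · subst hca
    have hd : d ≠ c := fun h => by simp [h] at hcd
    simp only [BallotAt, hts.countAbove_eq_of_ne hd]
    refine ⟨fun hball t => ?_, fun hball t => (hball t).trans (hle t)⟩
    have := hts.countAbove_eq hr hab hT hr' hba hT' t
    split_ifs at this with ho
    · have := countAbove_succ_lt_of_switchOpen hr hut hab hT hcd hball ho
      omega
    · have := hball t
      omega
  by_cases hda : d = a
  · subst hda
    refine ⟨fun hball t => ?_, fun hball t => ?_⟩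
    · rw [hts.countAbove_eq_of_ne hca]
      exact (hle (t + 1)).trans (hball t)
    have := hts.countAbove_eq hr hab hT hr' hba hT' (t + 1)
    rw [← hts.countAbove_eq_of_ne hca]
    split_ifs at this with ho
    · have := hts.countAbove_succ_lt_of_switchOpen_succ hr hab hT hr' hut' hba hT' hcd hball ho
      omega
    · have := hball t
      omega
  simp only [BallotAt, hts.countAbove_eq_of_ne hca, hts.countAbove_eq_of_ne hda]

end TableauSwitch

theorem isBallot_iff {n : ℕ} {w : List (Fin n)} :
    IsBallot w ↔
      ∀ c d : Fin n, c.val + 1 = d.val → ∀ p, p <+: w → p.count d ≤ p.count c := by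
  refine ⟨fun h ⟨c, hc⟩ ⟨d, hd⟩ hcd p hp => ?_, fun h p hp i hi => h _ _ rfl p hp⟩
  obtain rfl : d = c + 1 := hcd.symm
  exact h p hp c hd

section Words

variable {α : Type*}

theorem List.exists_flatten_take_prefix :
    ∀ {L : List (List α)} {p : List α}, p <+: L.flatten →
      ∃ t, (L.take t).flatten <+: p ∧ p <+: (L.take (t + 1)).flatten
  | [], p, hp => ⟨0, by simp, by simpa using hp⟩
  | l :: L, p, hp => by
    rw [List.flatten_cons] at hp
    rcases List.prefix_or_prefix_of_prefix hp (List.prefix_append l L.flatten) with h | ⟨q, rfl⟩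
    · exact ⟨0, by simp, by simpa using h⟩
    · obtain ⟨t, h₁, h₂⟩ := List.exists_flatten_take_prefix
        ((List.prefix_append_right_inj l).1 hp)
      refine ⟨t + 1, ?_, ?_⟩
      · simpa using (List.prefix_append_right_inj l).2 h₁
      · simpa using (List.prefix_append_right_inj l).2 h₂

theorem List.count_dropWhile_ne_eq_zero [DecidableEq α] {w : List α} {c d : α} (hcd : c ≠ d)
    (hw : w.Pairwise fun x y => y = d → x ≠ c) : (w.dropWhile (· ≠ c)).count d = 0 := by
  rcases hdrop : w.dropWhile (· ≠ c) with _ | ⟨x, rest⟩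
  · rfl
  have hx : x = c := by
    have := List.head_dropWhile_not (· ≠ c) (l := w) (by rw [hdrop]; exact List.cons_ne_nil _ _)
    simp only [hdrop, List.head_cons] at this
    simpa using this
  have hpw := hw.sublist (hdrop ▸ List.dropWhile_sublist _)
  rw [List.pairwise_cons] at hpw
  refine List.count_eq_zero.2 fun hmem => ?_
  rcases List.mem_cons.1 hmem with rfl | hmem
  exacts [hcd hx.symm, hpw.1 d hmem rfl hx]

theorem List.forall_prefix_count_le_iff [DecidableEq α] {L : List (List α)} {c d : α}
    (hcd : c ≠ d) (hL : ∀ l ∈ L, l.Pairwise fun x y => y = d → x ≠ c) :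
    (∀ p, p <+: L.flatten → p.count d ≤ p.count c) ↔
      ∀ t, (L.take (t + 1)).flatten.count d ≤ (L.take t).flatten.count c := by
  constructor
  · intro h t
    -- the extreme prefix ends just before the first `c` of row `t`
    set w := (L[t]?.toList).flatten
    have htake : (L.take (t + 1)).flatten = (L.take t).flatten ++ w := by
      rw [List.take_add_one, List.flatten_append]
    have hw : w.Pairwise fun x y => y = d → x ≠ c := by
      cases hLt : L[t]? with
      | none => simp [w, hLt]
      | some l => simpa [w, hLt] using hL l (List.mem_of_getElem? hLt)
    have hc : (w.takeWhile (· ≠ c)).count c = 0 :=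
      List.count_eq_zero.2 fun hmem => by simpa using List.mem_takeWhile_imp hmem
    have hd := List.count_dropWhile_ne_eq_zero hcd hw
    have hp : (L.take t).flatten ++ w.takeWhile (· ≠ c) <+: L.flatten :=
      ((List.prefix_append_right_inj _).2 (List.takeWhile_prefix _)).trans
        (htake ▸ (List.take_prefix (t + 1) L).flatten)
    have := h _ hp
    rw [htake, ← List.takeWhile_append_dropWhile (p := (· ≠ c)) (l := w)]
    simp only [List.count_append] at this ⊢
    omega
  · intro h p hp
    obtain ⟨t, h₁, h₂⟩ := List.exists_flatten_take_prefix hp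
    exact (h₂.count_le d).trans ((h t).trans (h₁.count_le c))

end Words

section ReadingWord

variable {n : ℕ} {ρ : Letter n → Letter n → Prop} {sh : YoungDiagram} {U : Filling n}

def unbarredEntry : Option (Letter n) → Option (Fin n)
  | some (false, a) => some a
  | _ => none

theorem unbarredEntry_eq_some_iff {o : Option (Letter n)} {z : Fin n} :
    unbarredEntry o = some z ↔ o = some (false, z) := by
  rcases o with _ | ⟨_ | _, k⟩ <;> simp [unbarredEntry]

def rowWord (sh : YoungDiagram) (U : Filling n) (x : ℕ) : List (Fin n) :=
  (List.range (sh.rowLen x)).reverse.filterMap fun j => unbarredEntry (U (x, j))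

theorem uWord_eq_flatten (sh : YoungDiagram) (U : Filling n) :
    uWord sh U = ((List.range (sh.colLen 0)).map (rowWord sh U)).flatten := by
  rw [uWord, List.flatMap_def]
  rfl

theorem count_rowWord (z : Fin n) (x : ℕ) :
    (rowWord sh U x).count z = rowCount sh U (false, z) x := by
  rw [rowWord, List.count_filterMap, List.countP_reverse, List.countP_eq_length_filter,
    rowCount, Finset.card_def, Finset.filter_val, Finset.range_val, Multiset.range,
    Multiset.filter_coe, Multiset.coe_card]
  simp only [beq_eq_decide, unbarredEntry_eq_some_iff]

theorem rowWord_pairwise (hρ : IsLinExt ρ) (hU : IsColoredTableau ρ sh U) (x : ℕ) :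
    (rowWord sh U x).Pairwise (· ≥ ·) := by
  rw [rowWord, List.pairwise_filterMap, List.pairwise_reverse]
  refine List.pairwise_lt_range.imp fun {j j'} hjj' z hz z' hz' => ?_
  rw [unbarredEntry_eq_some_iff] at hz hz'
  exact hρ.unbarred_iff.1 (hU.2.1 x j j' _ _ hjj'.le hz' hz)

theorem count_take_rows (z : Fin n) (t : ℕ) :
    (((List.range (sh.colLen 0)).map (rowWord sh U)).take t).flatten.count z =
      countAbove sh U (false, z) t := by
  induction t with
  | zero => simp [countAbove]
  | succ t ih =>
    rw [List.take_add_one, List.flatten_append, List.count_append, ih, countAbove_succ,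
      ← count_rowWord]
    congr 1
    rcases lt_or_ge t (sh.colLen 0) with ht | ht
    · simp [ht]
    · have : sh.rowLen t = 0 := by
        by_contra h
        have := YoungDiagram.mem_iff_lt_colLen.1
          (YoungDiagram.mem_iff_lt_rowLen.2 (Nat.pos_of_ne_zero h))
        omega
      simp [ht, rowWord, this]

theorem isBallot_uWord_iff (hρ : IsLinExt ρ) (hU : IsColoredTableau ρ sh U) :
    IsBallot (uWord sh U) ↔ ∀ c d : Fin n, c.val + 1 = d.val → BallotAt sh U c d := by
  rw [isBallot_iff, uWord_eq_flatten]
  refine forall₂_congr fun c d => forall_congr' fun hcd => ?_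
  have hcd' : c ≠ d := fun h => by simp [h] at hcd
  rw [List.forall_prefix_count_le_iff hcd' ?_]
  · simp only [count_take_rows, BallotAt]
  · simp only [List.mem_map, List.mem_range]
    rintro _ ⟨x, -, rfl⟩
    refine (rowWord_pairwise hρ hU x).imp fun {z z'} hzz' hz' hz => ?_
    subst hz hz'
    rw [ge_iff_le, Fin.le_def] at hzz'
    omega

end ReadingWord

/-- If `<` and `≺` are unbarred-tight total orders and `T`, `T'` are colored
tableaux related by a single conversion switch, then `u(T)` is a ballot sequence iff `u(T')`
is. -/
theorem uWord_ballot_iff_of_single_switch {n : ℕ} (r r' : Letter n → Letter n → Prop)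
    (hr : IsLinExt r) (hr' : IsLinExt r')
    (hut : UnbarredTight r) (hut' : UnbarredTight r')
    (sh : YoungDiagram) (T T' : Filling n)
    (hT : IsColoredTableau r sh T) (hT' : IsColoredTableau r' sh T')
    (a b : Fin n) (hsw : OrderSwitch r r' a b) (hts : TableauSwitch a b T T') :
    IsBallot (uWord sh T) ↔ IsBallot (uWord sh T') := by
  obtain ⟨hab, hba, -⟩ := hsw
  rw [isBallot_uWord_iff hr hT, isBallot_uWord_iff hr' hT']
  exact forall₂_congr fun c d => forall_congr' fun hcd =>
    hts.ballotAt_iff hr hut hab hT hr' hut' hba hT' hcd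
end

section
/- Let < be the natural order 1̄<1<2̄<2<⋯<n̄<n on 𝒜ₙ, let ν be a Young diagram, and let the southwest corner of ν be the box in the leftmost column of its bottom row. If T is a colored tableau of shape ν with respect to < whose southwest corner contains an unbarred letter i, then the filling T′ obtained from T by replacing that entry with ī is again a colored tableau with respect to <, and the total reverse reading words satisfy w(T′) = w(T); likewise, if the southwest corner of T contains a barred letter ī, replacing it with i yields a colored tableau with the same total reverse reading word. -/
open scoped Classical

/-!
The southwest corner is read last in `u(T)` and first in `v(T)`, so whether it holds `i` or `ī`
it contributes the single letter `i` where the two words meet. It is also the first box of its row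
and the last of its column, so the tableau conditions only compare it with entries `y` to its right
(`old ≤ y`) and `x` above it (`x ≤ old`). Since `ī` is covered by `i` in the natural order, these
inequalities pass to the new letter once `y`, resp. `x`, is known to differ from the old one, which
is what the strictness conditions say; the strictness conditions for the new letter follow from
`i ≰ ī`.
-/

section

variable {n : ℕ}

theorem List.filterMap_singleton {α β : Type*} (f : α → Option β) (a : α) :
    [a].filterMap f = (f a).toList := by
  cases h : f a <;> simp [h]

def southwestCorner (sh : YoungDiagram) : ℕ × ℕ := (sh.colLen 0 - 1, 0)

theorem colLen_zero_eq_southwestCorner_add_one {sh : YoungDiagram} (h : (0, 0) ∈ sh) :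
    sh.colLen 0 = (southwestCorner sh).1 + 1 := by
  have := YoungDiagram.mem_iff_lt_colLen.mp h
  simp only [southwestCorner]
  omega

theorem southwestCorner_mem {sh : YoungDiagram} (h : (0, 0) ∈ sh) : southwestCorner sh ∈ sh :=
  YoungDiagram.mem_iff_lt_colLen.mpr (by rw [colLen_zero_eq_southwestCorner_add_one h]; omega)

theorem le_southwestCorner_of_filled {r : Letter n → Letter n → Prop} {sh : YoungDiagram}
    {T : Filling n} (hT : IsColoredTableau r sh T) {i : ℕ} {x : Letter n}
    (hx : T (i, 0) = some x) : i ≤ (southwestCorner sh).1 := by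
  have := YoungDiagram.mem_iff_lt_colLen.mp ((hT.1 (i, 0)).mp (by simp [hx]))
  simp only [southwestCorner]
  omega

theorem mk_southwestCorner (sh : YoungDiagram) : ((southwestCorner sh).1, 0) = southwestCorner sh :=
  rfl

theorem update_southwestCorner_apply {sh : YoungDiagram} (T : Filling n) (v : Option (Letter n))
    (i j : ℕ) : Function.update T (southwestCorner sh) v (i, j) =
      if i = (southwestCorner sh).1 ∧ j = 0 then v else T (i, j) := by
  simp only [Function.update_apply, southwestCorner, Prod.mk.injEq]
  congr

theorem update_southwestCorner_of_fst_ne {sh : YoungDiagram} (T : Filling n) (v : Option (Letter n))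
    {i : ℕ} (hi : i ≠ (southwestCorner sh).1) (j : ℕ) :
    Function.update T (southwestCorner sh) v (i, j) = T (i, j) :=
  Function.update_of_ne (fun he => hi (congrArg Prod.fst he)) _ _

theorem update_southwestCorner_of_snd_ne {sh : YoungDiagram} (T : Filling n) (v : Option (Letter n))
    (i : ℕ) {j : ℕ} (hj : j ≠ 0) :
    Function.update T (southwestCorner sh) v (i, j) = T (i, j) :=
  Function.update_of_ne (fun he => hj (congrArg Prod.snd he)) _ _

def unbarredPart : Option (Letter n) → Option (Fin n)
  | some (false, a) => some a
  | _ => none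

def barredPart : Option (Letter n) → Option (Fin n)
  | some (true, b) => some b
  | _ => none

theorem unbarredPart_none : unbarredPart (none : Option (Letter n)) = none := rfl

theorem barredPart_none : barredPart (none : Option (Letter n)) = none := rfl

theorem uWord_eq_flatMap (sh : YoungDiagram) (T : Filling n) :
    uWord sh T = (List.range (sh.colLen 0)).flatMap fun i =>
      (List.range (sh.rowLen i)).reverse.filterMap fun j => unbarredPart (T (i, j)) := rfl

theorem vWord_eq_flatMap (sh : YoungDiagram) (T : Filling n) :
    vWord sh T = (List.range (sh.rowLen 0)).flatMap fun j =>
      (List.range (sh.colLen j)).reverse.filterMap fun i => barredPart (T (i, j)) := rfl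

theorem uWord_eq_append_southwestCorner {sh : YoungDiagram} (h : (0, 0) ∈ sh) (T : Filling n) :
    uWord sh T = uWord sh (Function.update T (southwestCorner sh) none) ++
      (unbarredPart (T (southwestCorner sh))).toList := by
  obtain ⟨k, hk⟩ : ∃ k, sh.rowLen (southwestCorner sh).1 = k + 1 :=
    Nat.exists_eq_add_one_of_ne_zero
      (YoungDiagram.mem_iff_lt_rowLen.mp (southwestCorner_mem h)).ne'
  rw [uWord_eq_flatMap, uWord_eq_flatMap, colLen_zero_eq_southwestCorner_add_one h,
    List.range_succ, List.flatMap_append, List.flatMap_append, List.flatMap_singleton,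
    List.flatMap_singleton, List.append_assoc]
  congr 1
  · refine List.flatMap_congr fun i hi => List.filterMap_congr fun j _ => ?_
    rw [update_southwestCorner_of_fst_ne _ _ (List.mem_range.mp hi).ne]
  · rw [hk, List.range_succ_eq_map, List.reverse_cons, List.filterMap_append,
      List.filterMap_append, List.filterMap_singleton, List.filterMap_singleton,
      mk_southwestCorner, Function.update_self, unbarredPart_none, Option.toList_none,
      List.append_nil]
    congr 1
    refine List.filterMap_congr fun j hj => ?_
    obtain ⟨j, -, rfl⟩ := List.mem_map.mp (List.mem_reverse.mp hj)
    rw [update_southwestCorner_of_snd_ne _ _ _ j.succ_ne_zero]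

theorem vWord_eq_southwestCorner_append {sh : YoungDiagram} (h : (0, 0) ∈ sh) (T : Filling n) :
    vWord sh T = (barredPart (T (southwestCorner sh))).toList ++
      vWord sh (Function.update T (southwestCorner sh) none) := by
  obtain ⟨m, hm⟩ := Nat.exists_eq_add_one_of_ne_zero (YoungDiagram.mem_iff_lt_rowLen.mp h).ne'
  rw [vWord_eq_flatMap, vWord_eq_flatMap, hm, List.range_succ_eq_map, List.flatMap_cons,
    List.flatMap_cons, colLen_zero_eq_southwestCorner_add_one h, List.range_succ,
    List.reverse_append, List.reverse_singleton, List.filterMap_append, List.filterMap_append,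
    List.filterMap_singleton, List.filterMap_singleton, mk_southwestCorner, Function.update_self,
    barredPart_none, Option.toList_none, List.nil_append, List.append_assoc]
  refine congrArg _ (congrArg₂ (· ++ ·) ?_ ?_)
  · refine List.filterMap_congr fun i hi => ?_
    rw [update_southwestCorner_of_fst_ne _ _ (List.mem_range.mp (List.mem_reverse.mp hi)).ne]
  · refine List.flatMap_congr fun j hj => List.filterMap_congr fun i _ => ?_
    obtain ⟨j, -, rfl⟩ := List.mem_map.mp hj
    rw [update_southwestCorner_of_snd_ne _ _ _ j.succ_ne_zero]

theorem wWord_eq_southwestCorner {sh : YoungDiagram} (h : (0, 0) ∈ sh) (T : Filling n) :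
    wWord sh T = uWord sh (Function.update T (southwestCorner sh) none) ++
      ((unbarredPart (T (southwestCorner sh))).toList ++
        (barredPart (T (southwestCorner sh))).toList) ++
      vWord sh (Function.update T (southwestCorner sh) none) := by
  rw [wWord, uWord_eq_append_southwestCorner h, vWord_eq_southwestCorner_append h]
  simp only [List.append_assoc]

theorem wWord_update_southwestCorner_toggle {sh : YoungDiagram} (h : (0, 0) ∈ sh)
    {T : Filling n} {b : Bool} {i : Fin n} (hT : T (southwestCorner sh) = some (b, i)) :
    wWord sh (Function.update T (southwestCorner sh) (some (!b, i))) = wWord sh T := by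
  rw [wWord_eq_southwestCorner h, wWord_eq_southwestCorner h T, Function.update_idem,
    Function.update_self, hT]
  cases b <;> rfl

theorem natOrd_refl : ∀ x, natOrd n x x :=
  fun x => Or.inr ⟨rfl, x.1.eq_false_or_eq_true⟩

theorem not_natOrd_unbarred_barred (a : Fin n) : ¬natOrd n (false, a) (true, a) := by
  rintro (h | ⟨-, h | h⟩) <;> simp at h

theorem natOrd_barred_left_iff {a : Fin n} {y : Letter n} :
    natOrd n (true, a) y ↔ y = (true, a) ∨ natOrd n (false, a) y := by
  obtain ⟨_ | _, b⟩ := y <;> simp [natOrd, Prod.ext_iff, eq_comm, or_comm]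

theorem natOrd_unbarred_right_iff {x : Letter n} {a : Fin n} :
    natOrd n x (false, a) ↔ x = (false, a) ∨ natOrd n x (true, a) := by
  obtain ⟨_ | _, b⟩ := x <;> simp [natOrd, Prod.ext_iff, or_comm]

theorem IsColoredTableau.update_southwestCorner {r : Letter n → Letter n → Prop}
    (hr : ∀ x, r x x) {sh : YoungDiagram} {T : Filling n} (hT : IsColoredTableau r sh T)
    (h : (0, 0) ∈ sh) (z : Letter n)
    (hrow : ∀ j y, j ≠ 0 → T ((southwestCorner sh).1, j) = some y →
      r z y ∧ (z.1 = true → y ≠ z))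
    (hcol : ∀ i x, i ≠ (southwestCorner sh).1 → T (i, 0) = some x →
      r x z ∧ (z.1 = false → x ≠ z)) :
    IsColoredTableau r sh (Function.update T (southwestCorner sh) (some z)) := by
  obtain ⟨hdom, hrowT, hcolT, hunbarT, hbarT⟩ := id hT
  refine ⟨fun d => ?_, fun i j₁ j₂ x y hj hx hy => ?_, fun i₁ i₂ j x y hi hx hy => ?_,
    fun i₁ i₂ j a hi hx hy => ?_, fun i j₁ j₂ b hj hx hy => ?_⟩
  · rcases eq_or_ne d (southwestCorner sh) with rfl | hd
    · simpa using southwestCorner_mem h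
    · rw [Function.update_of_ne hd, hdom]
  all_goals simp only [update_southwestCorner_apply] at hx hy
  · split_ifs at hx hy with h₁ h₂ h₂
    · cases hx; cases hy; exact hr z
    · obtain ⟨rfl, rfl⟩ := h₁
      cases hx
      exact (hrow j₂ y (by simpa using h₂) hy).1
    · exact absurd ⟨h₂.1, by omega⟩ h₁
    · exact hrowT i j₁ j₂ x y hj hx hy
  · split_ifs at hx hy with h₁ h₂ h₂
    · cases hx; cases hy; exact hr z
    · obtain ⟨rfl, rfl⟩ := h₁
      exact absurd ⟨(le_southwestCorner_of_filled hT hy).antisymm hi, rfl⟩ h₂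
    · obtain ⟨rfl, rfl⟩ := h₂
      cases hy
      exact (hcol i₁ x (fun h => h₁ ⟨h, rfl⟩) hx).1
    · exact hcolT i₁ i₂ j x y hi hx hy
  · split_ifs at hx hy with h₁ h₂ h₂
    · exact hi (h₁.1.trans h₂.1.symm)
    · obtain ⟨rfl, rfl⟩ := h₁
      cases hx
      exact (hcol i₂ _ hi.symm hy).2 rfl rfl
    · obtain ⟨rfl, rfl⟩ := h₂
      cases hy
      exact (hcol i₁ _ hi hx).2 rfl rfl
    · exact hunbarT i₁ i₂ j a hi hx hy
  · split_ifs at hx hy with h₁ h₂ h₂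
    · exact hj (h₁.2.trans h₂.2.symm)
    · obtain ⟨rfl, rfl⟩ := h₁
      cases hx
      exact (hrow j₂ _ hj.symm hy).2 rfl rfl
    · obtain ⟨rfl, rfl⟩ := h₂
      cases hy
      exact (hrow j₁ _ hj hx).2 rfl rfl
    · exact hbarT i j₁ j₂ b hj hx hy

theorem IsColoredTableau.bar_southwestCorner {sh : YoungDiagram} {T : Filling n}
    (hT : IsColoredTableau (natOrd n) sh T) (h : (0, 0) ∈ sh) {i : Fin n}
    (hi : T (southwestCorner sh) = some (false, i)) :
    IsColoredTableau (natOrd n) sh (Function.update T (southwestCorner sh) (some (true, i))) := by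
  obtain ⟨-, hrowT, hcolT, hunbarT, -⟩ := id hT
  refine hT.update_southwestCorner natOrd_refl h _ (fun j y _ hy => ?_) (fun k x hk hx => ?_)
  · have hiy := hrowT _ 0 j _ _ j.zero_le hi hy
    exact ⟨natOrd_barred_left_iff.mpr (Or.inr hiy),
      fun _ he => not_natOrd_unbarred_barred i (he ▸ hiy)⟩
  · have hxi := hcolT k _ 0 x _ (le_southwestCorner_of_filled hT hx) hx hi
    have hne : x ≠ (false, i) := fun he => hunbarT k _ 0 i hk (he ▸ hx) hi
    exact ⟨(natOrd_unbarred_right_iff.mp hxi).resolve_left hne, Bool.noConfusion⟩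

theorem IsColoredTableau.unbar_southwestCorner {sh : YoungDiagram} {T : Filling n}
    (hT : IsColoredTableau (natOrd n) sh T) (h : (0, 0) ∈ sh) {i : Fin n}
    (hi : T (southwestCorner sh) = some (true, i)) :
    IsColoredTableau (natOrd n) sh (Function.update T (southwestCorner sh) (some (false, i))) := by
  obtain ⟨-, hrowT, hcolT, -, hbarT⟩ := id hT
  refine hT.update_southwestCorner natOrd_refl h _ (fun j y hj hy => ?_) (fun k x _ hx => ?_)
  · have hiy := hrowT _ 0 j _ _ j.zero_le hi hy
    have hne : y ≠ (true, i) := fun he => hbarT _ 0 j i hj.symm hi (he ▸ hy)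
    exact ⟨(natOrd_barred_left_iff.mp hiy).resolve_left hne, Bool.noConfusion⟩
  · have hxi := hcolT k _ 0 x _ (le_southwestCorner_of_filled hT hx) hx hi
    exact ⟨natOrd_unbarred_right_iff.mpr (Or.inr hxi),
      fun _ he => not_natOrd_unbarred_barred i (he ▸ hxi)⟩

end

/-- For the natural order, toggling the bar on the entry in the southwest
corner of a colored tableau (the box in the leftmost column of the bottom row) yields again
a colored tableau with the same total reverse reading word. -/
theorem southwest_corner_toggle {n : ℕ} (ν : YoungDiagram) (hν : (0, 0) ∈ ν)
    (T : Filling n) (hT : IsColoredTableau (natOrd n) ν T) :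
    (∀ i : Fin n, T (ν.colLen 0 - 1, 0) = some (false, i) →
      IsColoredTableau (natOrd n) ν (Function.update T (ν.colLen 0 - 1, 0) (some (true, i))) ∧
      wWord ν (Function.update T (ν.colLen 0 - 1, 0) (some (true, i))) = wWord ν T) ∧
    (∀ i : Fin n, T (ν.colLen 0 - 1, 0) = some (true, i) →
      IsColoredTableau (natOrd n) ν (Function.update T (ν.colLen 0 - 1, 0) (some (false, i))) ∧
      wWord ν (Function.update T (ν.colLen 0 - 1, 0) (some (false, i))) = wWord ν T) :=
  ⟨fun _ hi => ⟨hT.bar_southwestCorner hν hi, wWord_update_southwestCorner_toggle hν hi⟩,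
    fun _ hi => ⟨hT.unbar_southwestCorner hν hi, wWord_update_southwestCorner_toggle hν hi⟩⟩
end
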